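/- arXiv:2002.03239 — 6 statements merged into one kernel-verified Lean document; each statement's English description precedes it below -/
import Mathlib

section
/- Let d ≥ 1 be an integer, σ > 0, and let p ≥ 1 be a real number. Let μ be a Borel probability measure on ℝ with no atoms, symmetric about 0 (the pushforward of μ under z ↦ −z equals μ), and with second moment ∫ z² dμ(z) = σ². Let P = μ^{⊗d} be the d-fold product measure on ℝ^d. Then for all real numbers p₁, p₂ ∈ (0,1) with p₁ ≥ 1/2 and p₁ + p₂ ≤ 1, there exist a measurable function h : ℝ^d → {0,1,2} and points x, x' ∈ ℝ^d such that: P{Δ : h(x+Δ) = 0} = p₁, P{Δ : h(x+Δ) = 1} = p₂, (∑_{i=1}^d |x'_i − x_i|^p)^{1/p} ≤ (σ / (2·√2·d^{1/2 − 1/p})) · (1/√(1−p₁) + 1/√(p₂)), and P{Δ : h(x'+Δ) = 1} ≥ P{Δ : h(x'+Δ) = 0}. (Hence the smoothed classifier's prediction is not constant within the ℓ_p-ball of this radius, so no larger ℓ_p-radius can be certified for all classifiers with these top-two class probabilities.) -/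
/-!
Let `S = Δ₁ + ⋯ + Δ_d`. Its law `ν` is atomless, symmetric and has second moment `dσ²`. Pick
`0 ≤ a ≤ b` with `ν (-∞, a] = p₁` and `ν (b, ∞) = p₂`, and let `h y` be `0`, `2` or `1` according
to whether `∑ yᵢ` lies in `(-∞, a]`, `(a, b]` or `(b, ∞)`. Moving from `x = 0` to the constant
vector `x'` with coordinate sum `(a + b) / 2` centres the band `(a, b]` at the origin, so by
symmetry of `ν` the classes `0` and `1` become equally likely at `x'`. The symmetric Chebyshev
bound `2 c² ν (c, ∞) ≤ dσ²` controls `a` and `b`, and `‖x'‖_p = ((a + b) / 2) d^(1/p - 1)`.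
-/

open MeasureTheory ProbabilityTheory Real Set

lemma MeasureTheory.Measure.prod_fst_add_eq_null {β : Type*} [MeasurableSpace β]
    {μ : Measure ℝ} {ν : Measure β} [SFinite μ] [NullSingletonClass μ] [SFinite ν] {f : β → ℝ}
    (hf : Measurable f) (c : ℝ) :
    μ.prod ν {q | q.1 + f q.2 = c} = 0 := by
  rw [Measure.prod_apply_symm (measurableSet_eq_fun (by fun_prop) measurable_const)]
  have hfiber (y : β) : (fun x => (x, y)) ⁻¹' {q : ℝ × β | q.1 + f q.2 = c} = {c - f y} := by
    ext x
    simp [eq_sub_iff_add_eq]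
  simp [hfiber]

namespace ProbabilityTheory

section SymmetricMeasure

variable {ρ : Measure ℝ}

lemma integral_id_eq_zero_of_isNegInvariant [ρ.IsNegInvariant] : ∫ z, z ∂ρ = 0 := by
  have h := integral_neg_eq_self (fun z : ℝ => z) ρ
  rw [integral_neg] at h
  linarith

lemma measure_Iic_neg [ρ.IsNegInvariant] (c : ℝ) : ρ (Iic (-c)) = ρ (Ici c) := by
  rw [← Measure.measure_neg, neg_Iic, neg_neg]

lemma measure_Iic_neg_eq_measure_Ioi [ρ.IsNegInvariant] [NullSingletonClass ρ] (c : ℝ) :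
    ρ (Iic (-c)) = ρ (Ioi c) := by
  rw [measure_Iic_neg, measure_congr Ioi_ae_eq_Ici]

lemma two_mul_sq_mul_measureReal_Ioi_le [IsFiniteMeasure ρ] [ρ.IsNegInvariant]
    (hρ : Integrable (fun z => z ^ 2) ρ) {c : ℝ} (hc : 0 ≤ c) :
    2 * c ^ 2 * ρ.real (Ioi c) ≤ ∫ z, z ^ 2 ∂ρ := by
  have htail : ρ.real (Ioi c) ≤ ρ.real (Iic (-c)) := by
    rw [measureReal_def, measureReal_def, measure_Iic_neg]
    exact ENNReal.toReal_mono (measure_ne_top _ _) (measure_mono Ioi_subset_Ici_self)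
  have hdisj : Disjoint (Ioi c) (Iic (-c)) :=
    disjoint_left.2 fun z h₁ h₂ => by simp only [mem_Ioi, mem_Iic] at h₁ h₂; linarith
  have hsub : Ioi c ∪ Iic (-c) ⊆ {z | c ^ 2 ≤ z ^ 2} := by
    rintro z (hz | hz) <;> simp only [mem_Ioi, mem_Iic, mem_ofPred_eq] at hz ⊢ <;> nlinarith
  calc 2 * c ^ 2 * ρ.real (Ioi c) ≤ c ^ 2 * (ρ.real (Ioi c) + ρ.real (Iic (-c))) := by
        nlinarith [sq_nonneg c]
    _ = c ^ 2 * ρ.real (Ioi c ∪ Iic (-c)) := by rw [measureReal_union hdisj measurableSet_Iic]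
    _ ≤ c ^ 2 * ρ.real {z | c ^ 2 ≤ z ^ 2} :=
        mul_le_mul_of_nonneg_left (measureReal_mono hsub) (sq_nonneg c)
    _ ≤ ∫ z, z ^ 2 ∂ρ :=
        mul_meas_ge_le_integral_of_nonneg (ae_of_all _ fun z => sq_nonneg z) hρ _

lemma le_sqrt_div_of_isNegInvariant [IsFiniteMeasure ρ] [ρ.IsNegInvariant]
    (hρ : Integrable (fun z => z ^ 2) ρ) {c : ℝ} (hc : 0 ≤ c) (hpos : 0 < ρ.real (Ioi c)) :
    c ≤ √(∫ z, z ^ 2 ∂ρ) / √(2 * ρ.real (Ioi c)) := by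
  rw [le_div_iff₀ (by positivity)]
  calc c * √(2 * ρ.real (Ioi c)) = √(c ^ 2 * (2 * ρ.real (Ioi c))) := by
        rw [Real.sqrt_mul (sq_nonneg c), Real.sqrt_sq hc]
    _ ≤ √(∫ z, z ^ 2 ∂ρ) :=
        Real.sqrt_le_sqrt (by linarith [two_mul_sq_mul_measureReal_Ioi_le hρ hc])

lemma variance_id_eq_integral_sq [ρ.IsNegInvariant] :
    Var[id; ρ] = ∫ z, z ^ 2 ∂ρ := by
  rw [variance_eq_integral measurable_id.aemeasurable]
  simp [integral_id_eq_zero_of_isNegInvariant]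

variable [IsProbabilityMeasure ρ]

lemma measureReal_Ioi_eq_one_sub_cdf (t : ℝ) : ρ.real (Ioi t) = 1 - cdf ρ t := by
  rw [← compl_Iic, probReal_compl_eq_one_sub measurableSet_Iic, cdf_eq_real]

lemma continuous_cdf [NullSingletonClass ρ] : Continuous (cdf ρ) := by
  refine continuous_iff_continuousAt.2 fun x => ?_
  rw [(monotone_cdf ρ).continuousAt_iff_leftLim_eq_rightLim, StieltjesFunction.rightLim_eq]
  have h := (cdf ρ).measure_singleton x
  rw [measure_cdf, measure_singleton, eq_comm, ENNReal.ofReal_eq_zero] at h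
  linarith [(monotone_cdf ρ).leftLim_le (le_refl x)]

lemma exists_ge_cdf_eq [NullSingletonClass ρ] {t₀ q : ℝ} (h₀ : cdf ρ t₀ ≤ q) (hq : q < 1) :
    ∃ t, t₀ ≤ t ∧ cdf ρ t = q := by
  obtain ⟨M, hM⟩ := Filter.eventually_atTop.1 ((tendsto_cdf_atTop ρ).eventually_const_le hq)
  obtain ⟨t, ht, hFt⟩ := intermediate_value_Icc (le_max_left t₀ M) continuous_cdf.continuousOn
    ⟨h₀, hM _ (le_max_right _ _)⟩
  exact ⟨t, ht.1, hFt⟩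

lemma cdf_zero_of_isNegInvariant [NullSingletonClass ρ] [ρ.IsNegInvariant] : cdf ρ 0 = 1 / 2 := by
  have h : ρ.real (Iic 0) = ρ.real (Ioi 0) := by
    rw [measureReal_def, measureReal_def, ← measure_Iic_neg_eq_measure_Ioi, neg_zero]
  rw [measureReal_Ioi_eq_one_sub_cdf, ← cdf_eq_real] at h
  linarith

lemma exists_cdf_eq_and_cdf_eq [NullSingletonClass ρ] [ρ.IsNegInvariant] {p₁ p₂ : ℝ}
    (hp₁ : 1 / 2 ≤ p₁) (hp₂ : 0 < p₂) (hsum : p₁ + p₂ ≤ 1) :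
    ∃ a b, 0 ≤ a ∧ a ≤ b ∧ cdf ρ a = p₁ ∧ cdf ρ b = 1 - p₂ := by
  obtain ⟨a, ha, hFa⟩ :=
    exists_ge_cdf_eq (cdf_zero_of_isNegInvariant (ρ := ρ) |>.trans_le hp₁) (by linarith)
  obtain ⟨b, hab, hFb⟩ :=
    exists_ge_cdf_eq (ρ := ρ) (t₀ := a) (q := 1 - p₂) (by linarith) (by linarith)
  exact ⟨a, b, ha, hab, hFa, hFb⟩

end SymmetricMeasure

section IidSum

noncomputable def iidSumLaw (μ : Measure ℝ) (d : ℕ) : Measure ℝ :=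
  (Measure.pi fun _ : Fin d => μ).map fun Δ => ∑ i, Δ i

variable {μ : Measure ℝ} {d : ℕ}

lemma measurable_sum_coord : Measurable fun Δ : Fin d → ℝ => ∑ i, Δ i := by fun_prop

lemma iidSumLaw_apply {s : Set ℝ} (hs : MeasurableSet s) :
    iidSumLaw μ d s = Measure.pi (fun _ : Fin d => μ) {Δ | ∑ i, Δ i ∈ s} :=
  Measure.map_apply measurable_sum_coord hs

noncomputable def bandClassifier (a b s : ℝ) : Fin 3 :=
  if s ≤ a then 0 else if b < s then 1 else 2

lemma measurable_bandClassifier {a b : ℝ} : Measurable (bandClassifier a b) :=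
  Measurable.ite measurableSet_Iic measurable_const
    (Measurable.ite measurableSet_Ioi measurable_const measurable_const)

lemma bandClassifier_eq_zero_iff {a b s : ℝ} : bandClassifier a b s = 0 ↔ s ≤ a := by
  unfold bandClassifier
  split_ifs <;> simp_all

lemma bandClassifier_eq_one_iff {a b s : ℝ} (hab : a ≤ b) : bandClassifier a b s = 1 ↔ b < s := by
  unfold bandClassifier
  split_ifs with h₁ h₂ <;> simp only [Fin.reduceEq, false_iff, true_iff, not_lt] <;> linarith

lemma pi_bandClassifier_eq_zero {a b : ℝ} (x : Fin d → ℝ) :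
    Measure.pi (fun _ => μ) {Δ | bandClassifier a b (∑ i, (x + Δ : Fin d → ℝ) i) = 0} =
      iidSumLaw μ d (Iic (a - ∑ i, x i)) := by
  rw [iidSumLaw_apply measurableSet_Iic]
  congr 1
  ext Δ
  simp only [mem_ofPred_eq, Pi.add_apply, Finset.sum_add_distrib, bandClassifier_eq_zero_iff,
    mem_Iic, le_sub_iff_add_le']

lemma pi_bandClassifier_eq_one {a b : ℝ} (hab : a ≤ b) (x : Fin d → ℝ) :
    Measure.pi (fun _ => μ) {Δ | bandClassifier a b (∑ i, (x + Δ : Fin d → ℝ) i) = 1} =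
      iidSumLaw μ d (Ioi (b - ∑ i, x i)) := by
  rw [iidSumLaw_apply measurableSet_Ioi]
  congr 1
  ext Δ
  simp only [mem_ofPred_eq, Pi.add_apply, Finset.sum_add_distrib, bandClassifier_eq_one_iff hab,
    mem_Ioi, sub_lt_iff_lt_add']

variable [IsProbabilityMeasure μ]

instance : IsProbabilityMeasure (iidSumLaw μ d) :=
  Measure.isProbabilityMeasure_map measurable_sum_coord.aemeasurable

lemma nullSingletonClass_iidSumLaw [NullSingletonClass μ] (hd : d ≠ 0) :
    NullSingletonClass (iidSumLaw μ d) := by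
  obtain ⟨n, rfl⟩ := Nat.exists_eq_succ_of_ne_zero hd
  refine ⟨fun c => ?_⟩
  have hsplit := measurePreserving_piFinSuccAbove (fun _ : Fin (n + 1) => μ) 0
  have hfiber : {Δ : Fin (n + 1) → ℝ | ∑ i, Δ i ∈ ({c} : Set ℝ)} =
      MeasurableEquiv.piFinSuccAbove (fun _ => ℝ) 0 ⁻¹' {q | q.1 + ∑ j, q.2 j = c} := by
    ext Δ
    simp [Fin.sum_univ_succ, MeasurableEquiv.piFinSuccAbove_apply, Fin.tail]
  rw [iidSumLaw_apply (measurableSet_singleton c), hfiber,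
    hsplit.measure_preimage_equiv, Measure.prod_fst_add_eq_null (by fun_prop)]

instance [μ.IsNegInvariant] : (iidSumLaw μ d).IsNegInvariant := by
  refine ⟨?_⟩
  have hneg : (Measure.pi fun _ : Fin d => μ).map Neg.neg = Measure.pi fun _ => μ :=
    (measurePreserving_pi _ _ fun _ => Measure.measurePreserving_neg μ).map_eq
  rw [Measure.neg, iidSumLaw, Measure.map_map measurable_neg measurable_sum_coord]
  conv_rhs => rw [← hneg, Measure.map_map measurable_sum_coord measurable_neg]
  congr 1
  ext Δ
  simp [Finset.sum_neg_distrib]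

lemma memLp_id_iidSumLaw (h : MemLp id 2 μ) : MemLp id 2 (iidSumLaw μ d) := by
  rw [iidSumLaw, memLp_map_measure_iff aestronglyMeasurable_id measurable_sum_coord.aemeasurable]
  have := memLp_finsetSum' Finset.univ fun i _ => h.comp_measurePreserving
    (measurePreserving_eval (fun _ : Fin d => μ) i)
  convert this using 1
  ext Δ
  simp

lemma variance_iidSumLaw (h : MemLp id 2 μ) : Var[id; iidSumLaw μ d] = d * Var[id; μ] := by
  rw [iidSumLaw, variance_map aemeasurable_id measurable_sum_coord.aemeasurable]
  have := variance_sum_pi (μ := fun _ : Fin d => μ) (X := fun _ => id) fun _ => h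
  simp only [Finset.sum_const, Finset.card_univ, Fintype.card_fin, nsmul_eq_mul] at this
  convert this using 2
  ext Δ
  simp

lemma integral_sq_iidSumLaw [μ.IsNegInvariant] (h : MemLp id 2 μ) :
    ∫ z, z ^ 2 ∂iidSumLaw μ d = d * ∫ z, z ^ 2 ∂μ := by
  rw [← variance_id_eq_integral_sq, ← variance_id_eq_integral_sq, variance_iidSumLaw h]

end IidSum

end ProbabilityTheory

lemma rpow_sum_const_rpow_inv {d : ℕ} {p t : ℝ} (hp : p ≠ 0) (ht : 0 ≤ t) :
    (∑ _i : Fin d, t ^ p) ^ (1 / p) = (d : ℝ) ^ (1 / p) * t := by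
  rw [Finset.sum_const, Finset.card_univ, Fintype.card_fin, nsmul_eq_mul,
    Real.mul_rpow (Nat.cast_nonneg d) (Real.rpow_nonneg ht p), ← Real.rpow_mul ht,
    mul_one_div_cancel hp, Real.rpow_one]

lemma sum_const_div_two_mul_card {d : ℕ} (hd : d ≠ 0) (m : ℝ) :
    ∑ _i : Fin d, m / (2 * d) = m / 2 := by
  rw [Finset.sum_const, Finset.card_univ, Fintype.card_fin, nsmul_eq_mul]
  field_simp

lemma lp_norm_const_midpoint_le {d : ℕ} (hd : d ≠ 0) {p σ a b q₁ q₂ : ℝ} (hp : p ≠ 0)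
    (hσ : 0 ≤ σ) (ha : 0 ≤ a) (hb : 0 ≤ b) (hq₁ : 0 < q₁) (hq₂ : 0 < q₂)
    (ha' : a ≤ √(d * σ ^ 2) / √(2 * q₁)) (hb' : b ≤ √(d * σ ^ 2) / √(2 * q₂)) :
    (∑ _i : Fin d, |(a + b) / (2 * d)| ^ p) ^ (1 / p) ≤
      σ / (2 * √2 * (d : ℝ) ^ ((1 : ℝ) / 2 - 1 / p)) * (1 / √q₁ + 1 / √q₂) := by
  have hd' : (0 : ℝ) < d := by positivity
  rw [abs_of_nonneg (by positivity), rpow_sum_const_rpow_inv hp (by positivity)]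
  have hsqrt : ∀ q : ℝ, 0 < q → √(d * σ ^ 2) / √(2 * q) = σ * √d / √2 * (1 / √q) := by
    intro q hq
    rw [Real.sqrt_mul hd'.le, Real.sqrt_sq hσ, Real.sqrt_mul zero_le_two]
    field_simp
  have hsum : a + b ≤ σ * √d / √2 * (1 / √q₁ + 1 / √q₂) := by
    rw [hsqrt q₁ hq₁] at ha'
    rw [hsqrt q₂ hq₂] at hb'
    linarith
  set e := (d : ℝ) ^ ((1 : ℝ) / 2 - 1 / p)
  have he : 0 < e := by positivity
  have hexp : (d : ℝ) ^ (1 / p) = √d / e := by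
    rw [eq_div_iff he.ne', ← Real.rpow_add hd', add_sub_cancel, Real.sqrt_eq_rpow]
  calc (d : ℝ) ^ (1 / p) * ((a + b) / (2 * d))
      ≤ √d / e * (σ * √d / √2 * (1 / √q₁ + 1 / √q₂) / (2 * d)) := by
        rw [hexp]; gcongr
    _ = σ / (2 * √2 * e) * (1 / √q₁ + 1 / √q₂) := by
        field_simp
        rw [Real.sq_sqrt hd'.le]
        ring

theorem curse_of_dimensionality_iid_smoothing_general
    (d : ℕ) (hd : 1 ≤ d) (σ : ℝ) (hσ : 0 < σ) (p : ℝ) (hp : 1 ≤ p)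
    (μ : Measure ℝ) [IsProbabilityMeasure μ] [NullSingletonClass μ]
    (hsym : Measure.map (fun z : ℝ => -z) μ = μ)
    (hvar : ∫ z, z ^ 2 ∂μ = σ ^ 2)
    (p₁ p₂ : ℝ) (hp₂ : p₂ ∈ Set.Ioo (0 : ℝ) 1)
    (hhalf : 1 / 2 ≤ p₁) (hsum : p₁ + p₂ ≤ 1) :
    ∃ (h : (Fin d → ℝ) → Fin 3) (x x' : Fin d → ℝ),
      Measurable h ∧
      Measure.pi (fun _ : Fin d => μ) {Δ | h (x + Δ) = 0} = ENNReal.ofReal p₁ ∧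
      Measure.pi (fun _ : Fin d => μ) {Δ | h (x + Δ) = 1} = ENNReal.ofReal p₂ ∧
      (∑ i, |x' i - x i| ^ p) ^ (1 / p) ≤
        σ / (2 * Real.sqrt 2 * (d : ℝ) ^ ((1 : ℝ) / 2 - 1 / p)) *
          (1 / Real.sqrt (1 - p₁) + 1 / Real.sqrt p₂) ∧
      Measure.pi (fun _ : Fin d => μ) {Δ | h (x' + Δ) = 0} ≤
        Measure.pi (fun _ : Fin d => μ) {Δ | h (x' + Δ) = 1} := by
  have : μ.IsNegInvariant := ⟨hsym⟩
  have hd₀ : d ≠ 0 := by omega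
  have := nullSingletonClass_iidSumLaw (μ := μ) hd₀
  have hμ : MemLp id 2 μ := (memLp_two_iff_integrable_sq aestronglyMeasurable_id).2
    (Integrable.of_integral_ne_zero (by simp only [id, hvar]; positivity))
  have hν : Integrable (fun z => z ^ 2) (iidSumLaw μ d) := (memLp_id_iidSumLaw hμ).integrable_sq
  have hν₂ : ∫ z, z ^ 2 ∂iidSumLaw μ d = d * σ ^ 2 := by rw [integral_sq_iidSumLaw hμ, hvar]
  obtain ⟨a, b, ha, hab, hFa, hFb⟩ :=
    exists_cdf_eq_and_cdf_eq (ρ := iidSumLaw μ d) hhalf hp₂.1 hsum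
  have hνa : (iidSumLaw μ d).real (Ioi a) = 1 - p₁ := by rw [measureReal_Ioi_eq_one_sub_cdf, hFa]
  have hνb : (iidSumLaw μ d).real (Ioi b) = p₂ := by
    rw [measureReal_Ioi_eq_one_sub_cdf, hFb, sub_sub_cancel]
  have hq₁ : 0 < 1 - p₁ := by linarith [hp₂.1]
  refine ⟨fun y => bandClassifier a b (∑ i, y i), 0, fun _ => (a + b) / (2 * d),
    measurable_bandClassifier.comp measurable_sum_coord, ?_, ?_, ?_, ?_⟩
  · rw [pi_bandClassifier_eq_zero, Pi.zero_def, Finset.sum_const_zero, sub_zero, ← ofReal_cdf, hFa]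
  · rw [pi_bandClassifier_eq_one hab, Pi.zero_def, Finset.sum_const_zero, sub_zero,
      ← ofReal_measureReal, hνb]
  · simp only [Pi.zero_apply, sub_zero]
    refine lp_norm_const_midpoint_le hd₀ (by linarith) hσ.le ha (ha.trans hab) hq₁ hp₂.1 ?_ ?_
    · simpa [hν₂, hνa] using le_sqrt_div_of_isNegInvariant hν ha (hνa ▸ hq₁)
    · simpa [hν₂, hνb] using le_sqrt_div_of_isNegInvariant hν (ha.trans hab) (hνb ▸ hp₂.1)
  · rw [pi_bandClassifier_eq_zero, pi_bandClassifier_eq_one hab, sum_const_div_two_mul_card hd₀,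
      show a - (a + b) / 2 = -(b - (a + b) / 2) by ring, measure_Iic_neg_eq_measure_Ioi]

/-- **Theorem 1 (general i.i.d. smoothing), counterexample form.**
For any symmetric, atomless i.i.d. smoothing distribution with per-coordinate
variance `σ²`, and any admissible top-two class probabilities `p₁, p₂`, there is
a classifier and a pair of points within the stated `ℓ_p`-distance on which the
smoothed prediction changes. -/
theorem curse_of_dimensionality_iid_smoothing
    (d : ℕ) (hd : 1 ≤ d) (σ : ℝ) (hσ : 0 < σ) (p : ℝ) (hp : 1 ≤ p)
    (μ : Measure ℝ) [IsProbabilityMeasure μ] [NullSingletonClass μ]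
    (hsym : Measure.map (fun z : ℝ => -z) μ = μ)
    (hvar : ∫ z, z ^ 2 ∂μ = σ ^ 2)
    (p₁ p₂ : ℝ) (hp₁ : p₁ ∈ Set.Ioo (0 : ℝ) 1) (hp₂ : p₂ ∈ Set.Ioo (0 : ℝ) 1)
    (hhalf : 1 / 2 ≤ p₁) (hsum : p₁ + p₂ ≤ 1) :
    ∃ (h : (Fin d → ℝ) → Fin 3) (x x' : Fin d → ℝ),
      Measurable h ∧
      Measure.pi (fun _ : Fin d => μ) {Δ | h (x + Δ) = 0} = ENNReal.ofReal p₁ ∧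
      Measure.pi (fun _ : Fin d => μ) {Δ | h (x + Δ) = 1} = ENNReal.ofReal p₂ ∧
      (∑ i, |x' i - x i| ^ p) ^ (1 / p) ≤
        σ / (2 * Real.sqrt 2 * (d : ℝ) ^ ((1 : ℝ) / 2 - 1 / p)) *
          (1 / Real.sqrt (1 - p₁) + 1 / Real.sqrt p₂) ∧
      Measure.pi (fun _ : Fin d => μ) {Δ | h (x' + Δ) = 0} ≤
        Measure.pi (fun _ : Fin d => μ) {Δ | h (x' + Δ) = 1} :=
  curse_of_dimensionality_iid_smoothing_general d hd σ hσ p hp μ hsym hvar p₁ p₂ hp₂ hhalf hsum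
end

section
/- Let d ≥ 1 be an integer, b > 0, and let p ≥ 1 be a real number. Let P be the uniform probability measure on the ℓ₁-ball {w ∈ ℝ^d : ∑_{i=1}^d |w_i| ≤ b}. Then there exist a measurable function h : ℝ^d → {0,1} and points x, x' ∈ ℝ^d with (∑_{i=1}^d |x'_i − x_i|^p)^{1/p} ≤ 2b/d such that P{Δ : h(x+Δ) = 0} > P{Δ : h(x+Δ) = 1} but P{Δ : h(x'+Δ) = 1} ≥ P{Δ : h(x'+Δ) = 0}. (Hence for uniform ℓ₁-ball smoothing no ℓ_p-radius of 2b/d can be certified for all classifiers, for any p.) -/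
/-!
Threshold one coordinate at `t = b / d`. For a finite smoothing measure invariant under `Δ ↦ -Δ`,
the event `{t ≤ Δᵢ}` has the mass of `{Δᵢ ≤ -t}`, which is strictly smaller than that of
`{Δᵢ < t}` because the slab `{|Δᵢ| < t}` contains the sup-norm ball of radius `b / d`, which lies
inside the ℓ₁-ball and has positive volume. Shifting by `2t` along the same axis turns the two
events into `{-t ≤ Δᵢ}` and `{Δᵢ < -t}`, and the latter is the reflection of a subset of the
former. The shift has ℓ_p-length `2b / d` for every `p`.
-/

open MeasureTheory Real Set

namespace MeasureTheory.Measure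

section IsNegInvariant

variable {G H : Type*} [MeasurableSpace G] [MeasurableSpace H] {μ : Measure G}

theorem isNegInvariant_smul [Neg G] [μ.IsNegInvariant] (c : ENNReal) : (c • μ).IsNegInvariant :=
  ⟨by rw [neg_def, Measure.map_smul, ← neg_def, neg_eq_self]⟩

variable [InvolutiveNeg G] [MeasurableNeg G] [μ.IsNegInvariant]

theorem isNegInvariant_restrict {s : Set G} (hs : -s = s) : (μ.restrict s).IsNegInvariant := by
  refine ⟨ext fun A hA => ?_⟩
  rw [neg_apply, restrict_apply hA.neg, restrict_apply hA, ← hs, ← Set.inter_neg, measure_neg, hs]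

theorem isNegInvariant_map [InvolutiveNeg H] [MeasurableNeg H] {f : G → H} (hf : Measurable f)
    (hodd : ∀ x, f (-x) = -f x) : (μ.map f).IsNegInvariant := by
  refine ⟨?_⟩
  rw [neg_def, map_map measurable_neg hf]
  have : Neg.neg ∘ f = f ∘ Neg.neg := funext fun x => (hodd x).symm
  rw [this, ← map_map hf measurable_neg, ← neg_def, neg_eq_self]

end IsNegInvariant

variable {ν : Measure ℝ} [ν.IsNegInvariant] {t : ℝ}

theorem measure_Ici_lt_measure_Iio [IsFiniteMeasure ν] (ht : 0 < ν (Ioo (-t) t)) :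
    ν (Ici t) < ν (Iio t) := by
  have hlt : -t < t := nonempty_Ioo.1 (nonempty_of_measure_ne_zero ht.ne')
  calc ν (Ici t) = ν (Iic (-t)) := by rw [← measure_neg, neg_Ici]
    _ < ν (Iic (-t)) + ν (Ioo (-t) t) := ENNReal.lt_add_right (measure_ne_top _ _) ht.ne'
    _ = ν (Iio t) := by
      rw [← measure_union ((Iic_disjoint_Ioi le_rfl).mono_right Ioo_subset_Ioi_self)
        measurableSet_Ioo, Iic_union_Ioo_eq_Iio hlt]

theorem measure_Iio_neg_le_measure_Ici_neg (ht : 0 ≤ t) : ν (Iio (-t)) ≤ ν (Ici (-t)) :=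
  calc ν (Iio (-t)) = ν (Ioi t) := by rw [← measure_neg, neg_Iio, neg_neg]
    _ ≤ ν (Ici (-t)) := measure_mono (Ioi_subset_Ici (by linarith))

end MeasureTheory.Measure

def l1Ball (ι : Type*) [Fintype ι] (b : ℝ) : Set (ι → ℝ) := {w | ∑ i, |w i| ≤ b}

section L1Ball

variable {ι : Type*} [Fintype ι] {b : ℝ}

theorem neg_l1Ball : -l1Ball ι b = l1Ball ι b := by
  ext w
  simp [l1Ball]

theorem isBounded_l1Ball : Bornology.IsBounded (l1Ball ι b) :=
  Metric.isBounded_closedBall.subset fun w hw => mem_closedBall_zero_iff.2 <|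
    (pi_norm_le_iff_of_nonneg ((Finset.sum_nonneg fun i _ => abs_nonneg (w i)).trans hw)).2 fun i =>
      (Finset.single_le_sum (fun j _ => abs_nonneg (w j)) (Finset.mem_univ i)).trans hw

theorem ball_subset_l1Ball : Metric.ball 0 (b / Fintype.card ι) ⊆ l1Ball ι b := by
  intro w hw
  rw [mem_ball_zero_iff] at hw
  have hcard : (Fintype.card ι : ℝ) ≠ 0 := by
    rintro h
    rw [h, div_zero] at hw
    exact (norm_nonneg w).not_gt hw
  have hcoord (i : ι) : |w i| ≤ b / Fintype.card ι := (norm_le_pi_norm w i).trans hw.le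
  calc ∑ i, |w i| ≤ ∑ _i : ι, b / Fintype.card ι := Finset.sum_le_sum fun i _ => hcoord i
    _ = b := by rw [Finset.sum_const, Finset.card_univ, nsmul_eq_mul, mul_div_cancel₀ _ hcard]

end L1Ball

noncomputable def thresholdClassifier {ι : Type*} (i : ι) (t : ℝ) (y : ι → ℝ) : Fin 2 :=
  if t ≤ y i then 1 else 0

section ThresholdClassifier

variable {ι : Type*} (i : ι) (t : ℝ)

theorem measurable_thresholdClassifier : Measurable (thresholdClassifier i t) :=
  Measurable.ite (measurableSet_le measurable_const (measurable_pi_apply i)) measurable_const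
    measurable_const

theorem setOf_thresholdClassifier_add_eq_one (x : ι → ℝ) :
    {Δ | thresholdClassifier i t (x + Δ) = 1} = (fun Δ => Δ i) ⁻¹' Ici (t - x i) := by
  ext Δ
  simp [thresholdClassifier, add_comm]

theorem setOf_thresholdClassifier_add_eq_zero (x : ι → ℝ) :
    {Δ | thresholdClassifier i t (x + Δ) = 0} = (fun Δ => Δ i) ⁻¹' Iio (t - x i) := by
  ext Δ
  simp [thresholdClassifier, lt_sub_iff_add_lt, add_comm]

end ThresholdClassifier

theorem sum_abs_single_rpow_rpow_one_div {ι : Type*} [Fintype ι] [DecidableEq ι] (i : ι) (a : ℝ)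
    {p : ℝ} (hp : p ≠ 0) : (∑ j, |Pi.single i a j| ^ p) ^ (1 / p) = |a| := by
  rw [Finset.sum_eq_single i (fun j _ hj => by simp [hj, zero_rpow hp]) (by simp),
    Pi.single_eq_same, one_div, rpow_rpow_inv (abs_nonneg a) hp]

theorem thresholdClassifier_smoothed_flip {ι : Type*} [DecidableEq ι] {μ : Measure (ι → ℝ)}
    [IsFiniteMeasure μ] [μ.IsNegInvariant] {i : ι} {t : ℝ}
    (ht : 0 < μ ((fun Δ => Δ i) ⁻¹' Ioo (-t) t)) :
    μ {Δ | thresholdClassifier i t (0 + Δ) = 1} < μ {Δ | thresholdClassifier i t (0 + Δ) = 0} ∧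
      μ {Δ | thresholdClassifier i t (Pi.single i (2 * t) + Δ) = 0} ≤
        μ {Δ | thresholdClassifier i t (Pi.single i (2 * t) + Δ) = 1} := by
  have heval : Measurable fun Δ : ι → ℝ => Δ i := measurable_pi_apply i
  have := Measure.isNegInvariant_map (μ := μ) heval fun _ => rfl
  simp only [setOf_thresholdClassifier_add_eq_one, setOf_thresholdClassifier_add_eq_zero,
    ← Measure.map_apply heval measurableSet_Ici, ← Measure.map_apply heval measurableSet_Iio,
    Pi.zero_apply, sub_zero, Pi.single_eq_same, show t - 2 * t = -t by ring]
  rw [← Measure.map_apply heval measurableSet_Ioo] at ht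
  have hpos : 0 < t := neg_lt_self_iff.1 (nonempty_Ioo.1 (nonempty_of_measure_ne_zero ht.ne'))
  exact ⟨Measure.measure_Ici_lt_measure_Iio ht, Measure.measure_Iio_neg_le_measure_Ici_neg hpos.le⟩

section UniformL1Ball

variable {ι : Type*} [Fintype ι] {b : ℝ} {c : ENNReal}

theorem isFiniteMeasure_smul_restrict_l1Ball (hc : c ≠ ⊤) :
    IsFiniteMeasure (c • volume.restrict (l1Ball ι b)) := by
  have : IsFiniteMeasure (volume.restrict (l1Ball ι b)) :=
    isFiniteMeasure_restrict.2 (isBounded_l1Ball (ι := ι) (b := b)).measure_lt_top.ne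
  exact Measure.smul_finite _ hc

theorem isNegInvariant_smul_restrict_l1Ball :
    (c • volume.restrict (l1Ball ι b)).IsNegInvariant := by
  have := Measure.isNegInvariant_restrict (μ := volume) (neg_l1Ball (ι := ι) (b := b))
  exact Measure.isNegInvariant_smul c

theorem smul_restrict_l1Ball_slab_pos (hc : c ≠ 0) (hb : 0 < b) (i : ι) :
    0 < (c • volume.restrict (l1Ball ι b))
      ((fun Δ => Δ i) ⁻¹' Ioo (-(b / Fintype.card ι)) (b / Fintype.card ι)) := by
  have hcard : (0 : ℝ) < Fintype.card ι := Nat.cast_pos.2 (Fintype.card_pos_iff.2 ⟨i⟩)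
  set t := b / Fintype.card ι
  have hball : Metric.ball 0 t ⊆ (fun Δ => Δ i) ⁻¹' Ioo (-t) t ∩ l1Ball ι b :=
    subset_inter (fun w hw => abs_lt.1 <| (norm_le_pi_norm w i).trans_lt (mem_ball_zero_iff.1 hw))
      ball_subset_l1Ball
  rw [Measure.smul_apply, smul_eq_mul,
    Measure.restrict_apply (measurable_pi_apply i measurableSet_Ioo)]
  exact ENNReal.mul_pos hc ((Metric.measure_ball_pos volume 0 (by positivity)).trans_le
    (measure_mono hball)).ne'

end UniformL1Ball

/-- **Theorem 4 (uniform ℓ₁-ball smoothing), counterexample form.**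
For the uniform distribution on the ℓ₁-ball of radius `b` (Lebesgue measure restricted
to it, normalized by its volume `2^d b^d / d!`), there is a classifier whose smoothed
prediction changes between two points at `ℓ_p`-distance at most `2b / d`. -/
theorem curse_of_dimensionality_uniform_l1_smoothing
    (d : ℕ) (hd : 1 ≤ d) (b : ℝ) (hb : 0 < b) (p : ℝ) (hp : 1 ≤ p) :
    ∃ (h : (Fin d → ℝ) → Fin 2) (x x' : Fin d → ℝ),
      Measurable h ∧
      (∑ i, |x' i - x i| ^ p) ^ (1 / p) ≤ 2 * b / (d : ℝ) ∧
      ((ENNReal.ofReal (2 ^ d * b ^ d / (d.factorial : ℝ)))⁻¹ •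
          volume.restrict {w : Fin d → ℝ | ∑ i, |w i| ≤ b})
          {Δ | h (x + Δ) = 1} <
        ((ENNReal.ofReal (2 ^ d * b ^ d / (d.factorial : ℝ)))⁻¹ •
          volume.restrict {w : Fin d → ℝ | ∑ i, |w i| ≤ b})
          {Δ | h (x + Δ) = 0} ∧
      ((ENNReal.ofReal (2 ^ d * b ^ d / (d.factorial : ℝ)))⁻¹ •
          volume.restrict {w : Fin d → ℝ | ∑ i, |w i| ≤ b})
          {Δ | h (x' + Δ) = 0} ≤
        ((ENNReal.ofReal (2 ^ d * b ^ d / (d.factorial : ℝ)))⁻¹ •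
          volume.restrict {w : Fin d → ℝ | ∑ i, |w i| ≤ b})
          {Δ | h (x' + Δ) = 1} := by
  set c := (ENNReal.ofReal (2 ^ d * b ^ d / (d.factorial : ℝ)))⁻¹
  have hc0 : c ≠ 0 := ENNReal.inv_ne_zero.2 ENNReal.ofReal_ne_top
  have hcT : c ≠ ⊤ := ENNReal.inv_ne_top.2 (ENNReal.ofReal_pos.2 (by positivity)).ne'
  let i : Fin d := ⟨0, hd⟩
  have := isFiniteMeasure_smul_restrict_l1Ball (ι := Fin d) (b := b) hcT
  have := isNegInvariant_smul_restrict_l1Ball (ι := Fin d) (b := b) (c := c)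
  have hslab := smul_restrict_l1Ball_slab_pos hc0 hb i
  rw [Fintype.card_fin] at hslab
  refine ⟨thresholdClassifier i (b / d), 0, Pi.single i (2 * (b / d)),
    measurable_thresholdClassifier i _, ?_,
    thresholdClassifier_smoothed_flip (μ := c • volume.restrict (l1Ball (Fin d) b)) hslab⟩
  simp only [Pi.zero_apply, sub_zero]
  rw [sum_abs_single_rpow_rpow_one_div i _ (zero_lt_one.trans_le hp).ne',
    abs_of_nonneg (by positivity), mul_div_assoc]
end

section
/- Let b > 0 and q ≥ 1, and let Z be a real random variable with the generalized Gaussian distribution of scale b and shape q, whose variance is σ² = b²·Γ(3/q)/Γ(1/q). Then for every real t with (1.85)²·t²·σ² < 1, the moment generating function satisfies E[exp(tZ)] ≤ ∑_{m=0}^∞ ((1.85)²·t²·σ²)^m = 1/(1 − (1.85)²·t²·σ²). -/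
open MeasureTheory Real

/-- The generalized Gaussian distribution with scale `b` and shape `q`:
density `z ↦ (q/(2bΓ(1/q))) · exp(−(|z|/b)^q)` w.r.t. Lebesgue measure. -/
noncomputable def genGaussian (b q : ℝ) : Measure ℝ :=
  volume.withDensity
    (fun z => ENNReal.ofReal ((q / (2 * b * Real.Gamma (1 / q))) * Real.exp (-((|z| / b) ^ q))))

/-!
By symmetry of the density, `E[exp (tZ)] = E[cosh (tZ)] = ∑ t^(2m) E[Z^(2m)] / (2m)!`. With
`x = 1/q ∈ (0, 1]` the even moments are `E[Z^(2m)] = b^(2m) Γ((2m+1)x) / Γ(x)`, so `σ² = E[Z²]`, and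
it suffices to show `E[Z^(2m)] ≤ (3/2)^m (2m)! σ^(2m)`, i.e.
`Γ((2m+1)x) / Γ(x) ≤ (3/2)^m (2m)! (Γ(3x) / Γ(x))^m`. This is proved one factor at a time:
`Γ((n+2)x) / Γ(nx) ≤ (3/2) n (n+1) Γ(3x) / Γ(x)` for `n ≥ 1`, by Wendel's inequality
`Γ(y+s) ≤ Γ(y) y^s` (`0 ≤ s ≤ 1`, from log-convexity of `Γ`), applied differently according as
`2x ≤ 1` or `2x ≥ 1`. Since `3/2 < 1.85²`, the constant `1.85` has room to spare.
-/

open Nat Set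
open scoped ENNReal

namespace Real

theorem Gamma_add_le_mul_rpow {y s : ℝ} (hy : 0 < y) (hs₀ : 0 ≤ s) (hs₁ : s ≤ 1) :
    Gamma (y + s) ≤ Gamma y * y ^ s := by
  have h := convexOn_log_Gamma.2 (mem_Ioi.2 hy) (mem_Ioi.2 (by linarith : 0 < y + 1))
    (by linarith : 0 ≤ 1 - s) hs₀ (by ring)
  simp only [Function.comp_apply, smul_eq_mul] at h
  rw [show (1 - s) * y + s * (y + 1) = y + s by ring, Gamma_add_one hy.ne',
    log_mul hy.ne' (Gamma_pos_of_pos hy).ne'] at h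
  have hΓy := Gamma_pos_of_pos hy
  rw [← log_le_log_iff (Gamma_pos_of_pos (by linarith)) (by positivity),
    log_mul hΓy.ne' (rpow_pos_of_pos hy s).ne', log_rpow hy]
  linarith

theorem Gamma_add_two_mul_mul_Gamma_le_of_two_mul_le_one {x n : ℝ} (hx : 0 < x)
    (hx₂ : 2 * x ≤ 1) (hn : 1 ≤ n) :
    Gamma (n * x + 2 * x) * Gamma x ≤ 3 / 2 * n * (n + 1) * (Gamma (n * x) * Gamma (3 * x)) := by
  have hnx : 0 < n * x := by positivity
  have hupper := Gamma_add_le_mul_rpow hnx (by linarith) hx₂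
  have hlower : x * Gamma x ≤ Gamma (3 * x) * (3 * x) ^ (1 - 2 * x) := by
    rw [← Gamma_add_one hx.ne', show x + 1 = 3 * x + (1 - 2 * x) by ring]
    exact Gamma_add_le_mul_rpow (by positivity) (by linarith) (by linarith)
  have hrpow : (n * x) ^ (2 * x) * (3 * x) ^ (1 - 2 * x) ≤ 3 * n * x := by
    calc (n * x) ^ (2 * x) * (3 * x) ^ (1 - 2 * x)
        ≤ (3 * n * x) ^ (2 * x) * (3 * n * x) ^ (1 - 2 * x) := by
          gcongr <;> nlinarith
      _ = 3 * n * x := by rw [← rpow_add (by positivity)]; norm_num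
  have hΓnx := Gamma_pos_of_pos hnx
  have hΓ3x := Gamma_pos_of_pos (by positivity : 0 < 3 * x)
  refine le_of_mul_le_mul_left ?_ hx
  calc x * (Gamma (n * x + 2 * x) * Gamma x)
      = Gamma (n * x + 2 * x) * (x * Gamma x) := by ring
    _ ≤ Gamma (n * x) * (n * x) ^ (2 * x) * (Gamma (3 * x) * (3 * x) ^ (1 - 2 * x)) := by
        gcongr
    _ = Gamma (n * x) * Gamma (3 * x) * ((n * x) ^ (2 * x) * (3 * x) ^ (1 - 2 * x)) := by ring
    _ ≤ Gamma (n * x) * Gamma (3 * x) * (3 * n * x) := by gcongr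
    _ ≤ x * (3 / 2 * n * (n + 1) * (Gamma (n * x) * Gamma (3 * x))) := by
        have : 0 ≤ Gamma (n * x) * Gamma (3 * x) * (n * x) := by positivity
        nlinarith

theorem Gamma_add_two_mul_mul_Gamma_le_of_one_le_two_mul {x n : ℝ} (hx₁ : x ≤ 1)
    (hx₂ : 1 ≤ 2 * x) (hn : 1 ≤ n) :
    Gamma (n * x + 2 * x) * Gamma x ≤ n * (n + 1) * (Gamma (n * x) * Gamma (3 * x)) := by
  have hx : 0 < x := by linarith
  have hnx : 0 < n * x := by positivity
  have hupper : Gamma (n * x + 2 * x)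
      ≤ (n * x + (2 * x - 1)) * (Gamma (n * x) * (n * x) ^ (2 * x - 1)) := by
    rw [show n * x + 2 * x = n * x + (2 * x - 1) + 1 by ring, Gamma_add_one (by nlinarith)]
    gcongr
    exact Gamma_add_le_mul_rpow hnx (by linarith) (by linarith)
  have h3x : 0 < 3 * x - 1 := by linarith
  have hlower : x * Gamma x * (3 * x - 1) ^ (2 * x - 1) ≤ Gamma (3 * x) := by
    have h := Gamma_add_le_mul_rpow (s := 2 - 2 * x) h3x (by linarith) (by linarith)
    rw [show 3 * x - 1 + (2 - 2 * x) = x + 1 by ring, Gamma_add_one hx.ne'] at h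
    calc x * Gamma x * (3 * x - 1) ^ (2 * x - 1)
        ≤ Gamma (3 * x - 1) * (3 * x - 1) ^ (2 - 2 * x) * (3 * x - 1) ^ (2 * x - 1) := by gcongr
      _ = Gamma (3 * x - 1 + 1) := by
        rw [mul_assoc, ← rpow_add h3x, show 2 - 2 * x + (2 * x - 1) = 1 by ring, rpow_one,
          Gamma_add_one h3x.ne', mul_comm]
      _ = Gamma (3 * x) := by ring_nf
  have hrpow : (n * x) ^ (2 * x - 1) ≤ n * (3 * x - 1) ^ (2 * x - 1) :=
    calc (n * x) ^ (2 * x - 1) ≤ (n * (3 * x - 1)) ^ (2 * x - 1) := by gcongr; linarith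
      _ = n ^ (2 * x - 1) * (3 * x - 1) ^ (2 * x - 1) := mul_rpow (by linarith) (by linarith)
      _ ≤ n * (3 * x - 1) ^ (2 * x - 1) := by
        gcongr
        exact (rpow_le_rpow_of_exponent_le hn (by linarith)).trans_eq (rpow_one n)
  have hΓx := Gamma_pos_of_pos hx
  refine le_of_mul_le_mul_left ?_ (by positivity : 0 < x * (3 * x - 1) ^ (2 * x - 1))
  calc x * (3 * x - 1) ^ (2 * x - 1) * (Gamma (n * x + 2 * x) * Gamma x)
      = Gamma (n * x + 2 * x) * (x * Gamma x * (3 * x - 1) ^ (2 * x - 1)) := by ring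
    _ ≤ (n * x + (2 * x - 1)) * (Gamma (n * x) * (n * x) ^ (2 * x - 1)) * Gamma (3 * x) := by
        gcongr
    _ ≤ (n + 1) * x * (Gamma (n * x) * (n * (3 * x - 1) ^ (2 * x - 1))) * Gamma (3 * x) := by
        gcongr
        linarith
    _ = x * (3 * x - 1) ^ (2 * x - 1) * (n * (n + 1) * (Gamma (n * x) * Gamma (3 * x))) := by
        ring

theorem Gamma_add_two_mul_div_Gamma_le {x n : ℝ} (hx : 0 < x) (hx₁ : x ≤ 1) (hn : 1 ≤ n) :
    Gamma (n * x + 2 * x) / Gamma (n * x) ≤ 3 / 2 * n * (n + 1) * (Gamma (3 * x) / Gamma x) := by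
  have hΓnx := Gamma_pos_of_pos (by positivity : 0 < n * x)
  have hΓx := Gamma_pos_of_pos hx
  have key : Gamma (n * x + 2 * x) * Gamma x
      ≤ 3 / 2 * n * (n + 1) * (Gamma (n * x) * Gamma (3 * x)) := by
    rcases le_total (2 * x) 1 with hx₂ | hx₂
    · exact Gamma_add_two_mul_mul_Gamma_le_of_two_mul_le_one hx hx₂ hn
    · refine (Gamma_add_two_mul_mul_Gamma_le_of_one_le_two_mul hx₁ hx₂ hn).trans ?_
      have := Gamma_pos_of_pos (by positivity : 0 < 3 * x)
      have : 0 ≤ n * (n + 1) * (Gamma (n * x) * Gamma (3 * x)) := by positivity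
      linarith
  rw [← le_div_iff₀ hΓx] at key
  rw [div_le_iff₀ hΓnx]
  exact key.trans_eq (by ring)

theorem Gamma_two_mul_add_one_mul_div_Gamma_le {x : ℝ} (hx : 0 < x) (hx₁ : x ≤ 1) (m : ℕ) :
    Gamma ((2 * m + 1) * x) / Gamma x
      ≤ (3 / 2) ^ m * (2 * m)! * (Gamma (3 * x) / Gamma x) ^ m := by
  induction m with
  | zero => simp [(Gamma_pos_of_pos hx).ne']
  | succ m ih =>
    have hn : (1 : ℝ) ≤ 2 * m + 1 := by linarith [m.cast_nonneg (α := ℝ)]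
    have hstep := Gamma_add_two_mul_div_Gamma_le hx hx₁ hn
    have hR : 0 ≤ Gamma (3 * x) / Gamma x := by
      have := Gamma_pos_of_pos hx; have := Gamma_pos_of_pos (by positivity : 0 < 3 * x); positivity
    calc Gamma ((2 * ↑(m + 1) + 1) * x) / Gamma x
        = Gamma ((2 * m + 1) * x + 2 * x) / Gamma ((2 * m + 1) * x)
          * (Gamma ((2 * m + 1) * x) / Gamma x) := by
          rw [div_mul_div_cancel₀ (Gamma_pos_of_pos (by positivity)).ne']
          push_cast; ring_nf
      _ ≤ 3 / 2 * (2 * m + 1) * (2 * m + 1 + 1) * (Gamma (3 * x) / Gamma x)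
          * ((3 / 2) ^ m * (2 * m)! * (Gamma (3 * x) / Gamma x) ^ m) := by
          gcongr
      _ = (3 / 2) ^ (m + 1) * (2 * (m + 1))! * (Gamma (3 * x) / Gamma x) ^ (m + 1) := by
          rw [show 2 * (m + 1) = 2 * m + 1 + 1 by ring, Nat.factorial_succ, Nat.factorial_succ]
          push_cast; ring

end Real

theorem MeasureTheory.Measure.isNegInvariant_withDensity {G : Type*} [MeasurableSpace G]
    [InvolutiveNeg G] [MeasurableNeg G] {μ : Measure G} [μ.IsNegInvariant] {ρ : G → ℝ≥0∞}
    (hρ : Measurable ρ) (hρ_neg : ∀ x, ρ (-x) = ρ x) :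
    (μ.withDensity ρ).IsNegInvariant := by
  refine ⟨Measure.ext_of_lintegral _ fun f hf => ?_⟩
  have hf_neg : Measurable fun x => f (-x) := hf.comp measurable_neg
  rw [Measure.neg, lintegral_map hf measurable_neg,
    lintegral_withDensity_eq_lintegral_mul _ hρ hf_neg,
    lintegral_withDensity_eq_lintegral_mul _ hρ hf, ← lintegral_neg_eq_self (ρ * f)]
  simp only [Pi.mul_apply, hρ_neg]

theorem lintegral_ofReal_exp_mul_eq_cosh (μ : Measure ℝ) [μ.IsNegInvariant] (t : ℝ) :
    ∫⁻ z, ENNReal.ofReal (exp (t * z)) ∂μ = ∫⁻ z, ENNReal.ofReal (cosh (t * z)) ∂μ := by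
  have hcosh : ∀ z, ENNReal.ofReal (cosh (t * z))
      = 2⁻¹ * ENNReal.ofReal (exp (t * z)) + 2⁻¹ * ENNReal.ofReal (exp (t * -z)) := by
    intro z
    rw [cosh_eq, div_eq_inv_mul, ENNReal.ofReal_mul (by norm_num), ENNReal.ofReal_add
      (exp_pos _).le (exp_pos _).le, ENNReal.ofReal_inv_of_pos two_pos, ENNReal.ofReal_ofNat,
      mul_add, mul_neg]
  simp_rw [hcosh]
  rw [lintegral_add_left (by fun_prop), lintegral_const_mul' _ _ (by simp),
    lintegral_const_mul' _ _ (by simp),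
    lintegral_neg_eq_self (fun z => ENNReal.ofReal (exp (t * z))), ← add_mul,
    ENNReal.inv_two_add_inv_two, one_mul]

theorem lintegral_ofReal_cosh_mul_eq_tsum (μ : Measure ℝ) (t : ℝ) :
    ∫⁻ z, ENNReal.ofReal (cosh (t * z)) ∂μ
      = ∑' m : ℕ, ENNReal.ofReal (t ^ (2 * m) / (2 * m)!) *
          ∫⁻ z, ENNReal.ofReal (z ^ (2 * m)) ∂μ := by
  have hterm : ∀ (m : ℕ) z, 0 ≤ (t * z) ^ (2 * m) / (2 * m)! := fun m z => by
    have := (even_two_mul m).pow_nonneg (t * z); positivity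
  calc ∫⁻ z, ENNReal.ofReal (cosh (t * z)) ∂μ
      = ∫⁻ z, ∑' m : ℕ, ENNReal.ofReal ((t * z) ^ (2 * m) / (2 * m)!) ∂μ := by
        refine lintegral_congr fun z => ?_
        rw [← (hasSum_cosh (t * z)).tsum_eq,
          ENNReal.ofReal_tsum_of_nonneg (hterm · z) (hasSum_cosh (t * z)).summable]
    _ = ∑' m : ℕ, ∫⁻ z, ENNReal.ofReal ((t * z) ^ (2 * m) / (2 * m)!) ∂μ :=
        lintegral_tsum fun m => by fun_prop
    _ = _ := by
        congr 1 with m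
        rw [← lintegral_const_mul _ (by fun_prop)]
        refine lintegral_congr fun z => ?_
        rw [← ENNReal.ofReal_mul (by have := (even_two_mul m).pow_nonneg t; positivity)]
        ring_nf

theorem integral_abs_rpow_mul_exp_neg_abs_div_rpow {b q s : ℝ} (hb : 0 < b) (hq : 0 < q)
    (hs : -1 < s) :
    ∫ z, |z| ^ s * exp (-((|z| / b) ^ q)) = 2 * b ^ (s + 1) / q * Gamma ((s + 1) / q) := by
  have hIoi : ∫ u in Ioi 0, u ^ s * exp (-((u / b) ^ q))
      = ∫ u in Ioi 0, u ^ s * exp (-(b ^ (-q)) * u ^ q) :=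
    setIntegral_congr_fun measurableSet_Ioi fun u hu => by
      rw [div_rpow (le_of_lt hu) hb.le, rpow_neg hb.le, div_eq_inv_mul, neg_mul]
  rw [integral_comp_abs (f := fun u => u ^ s * exp (-((u / b) ^ q))), hIoi,
    integral_rpow_mul_exp_neg_mul_rpow hq hs (by positivity), ← rpow_mul hb.le,
    show -q * (-(s + 1) / q) = s + 1 by field_simp]
  ring

theorem genGaussian_lintegral_pow_two_mul {b q : ℝ} (hb : 0 < b) (hq : 0 < q) (m : ℕ) :
    ∫⁻ z, ENNReal.ofReal (z ^ (2 * m)) ∂genGaussian b q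
      = ENNReal.ofReal (b ^ (2 * m) * Gamma ((2 * m + 1) / q) / Gamma (1 / q)) := by
  set C := q / (2 * b * Gamma (1 / q)) with hC_def
  have hΓ := Gamma_pos_of_pos (by positivity : 0 < 1 / q)
  have hC : 0 < C := by positivity
  have hmoment : ∫ z, C * exp (-((|z| / b) ^ q)) * z ^ (2 * m)
      = b ^ (2 * m) * Gamma ((2 * m + 1) / q) / Gamma (1 / q) := by
    calc ∫ z, C * exp (-((|z| / b) ^ q)) * z ^ (2 * m)
        = ∫ z, C * (|z| ^ ((2 * m : ℕ) : ℝ) * exp (-((|z| / b) ^ q))) := by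
          congr 1 with z
          rw [rpow_natCast, (even_two_mul m).pow_abs]
          ring
      _ = C * (2 * b ^ ((2 * m : ℕ) + 1 : ℝ) / q * Gamma (((2 * m : ℕ) + 1 : ℝ) / q)) := by
          rw [integral_const_mul, integral_abs_rpow_mul_exp_neg_abs_div_rpow hb hq
            (by linarith [(2 * m : ℕ).cast_nonneg (α := ℝ)])]
      _ = b ^ (2 * m) * Gamma ((2 * m + 1) / q) / Gamma (1 / q) := by
          rw [← Nat.cast_succ, rpow_natCast, hC_def, pow_succ]
          push_cast
          field_simp
  have hpos : 0 < b ^ (2 * m) * Gamma ((2 * m + 1) / q) / Gamma (1 / q) := by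
    have := Gamma_pos_of_pos (by positivity : 0 < (2 * m + 1) / q)
    positivity
  rw [genGaussian, lintegral_withDensity_eq_lintegral_mul _ (by fun_prop) (by fun_prop),
    ← hmoment, ofReal_integral_eq_lintegral_ofReal
    (Integrable.of_integral_ne_zero (hmoment ▸ hpos.ne'))
    (ae_of_all _ fun z => by have := (even_two_mul m).pow_nonneg z; positivity)]
  exact lintegral_congr fun z => (ENNReal.ofReal_mul (mul_nonneg hC.le (exp_pos _).le)).symm

instance isNegInvariant_genGaussian (b q : ℝ) : (genGaussian b q).IsNegInvariant :=
  Measure.isNegInvariant_withDensity (by fun_prop) fun z => by simp only [abs_neg]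

theorem genGaussian_moment_le {b q σ : ℝ} (hq : 1 ≤ q)
    (hσ : σ ^ 2 = b ^ 2 * Gamma (3 / q) / Gamma (1 / q)) (m : ℕ) :
    b ^ (2 * m) * Gamma ((2 * m + 1) / q) / Gamma (1 / q)
      ≤ (3 / 2) ^ m * (2 * m)! * σ ^ (2 * m) :=
  calc b ^ (2 * m) * Gamma ((2 * m + 1) / q) / Gamma (1 / q)
      = (b ^ 2) ^ m * (Gamma ((2 * m + 1) * (1 / q)) / Gamma (1 / q)) := by
        rw [mul_one_div, ← pow_mul, mul_div_assoc]
    _ ≤ (b ^ 2) ^ m * ((3 / 2) ^ m * (2 * m)! * (Gamma (3 * (1 / q)) / Gamma (1 / q)) ^ m) := by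
        gcongr
        exact Gamma_two_mul_add_one_mul_div_Gamma_le (by positivity)
          ((div_le_one (by positivity)).2 hq) m
    _ = (3 / 2) ^ m * (2 * m)! * σ ^ (2 * m) := by
        rw [mul_one_div, pow_mul, hσ]
        ring

theorem genGaussian_lintegral_exp_mul_le {b q σ : ℝ} (hb : 0 < b) (hq : 1 ≤ q)
    (hσ : σ ^ 2 = b ^ 2 * Gamma (3 / q) / Gamma (1 / q)) (t : ℝ) :
    ∫⁻ z, ENNReal.ofReal (exp (t * z)) ∂genGaussian b q
      ≤ ∑' m : ℕ, ENNReal.ofReal ((3 / 2 * t ^ 2 * σ ^ 2) ^ m) := by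
  rw [lintegral_ofReal_exp_mul_eq_cosh, lintegral_ofReal_cosh_mul_eq_tsum]
  refine ENNReal.tsum_le_tsum fun m => ?_
  have ht : 0 ≤ t ^ (2 * m) / (2 * m)! := by
    have := (even_two_mul m).pow_nonneg t; positivity
  rw [genGaussian_lintegral_pow_two_mul hb (by positivity), ← ENNReal.ofReal_mul ht]
  refine ENNReal.ofReal_le_ofReal ?_
  calc t ^ (2 * m) / (2 * m)! * (b ^ (2 * m) * Gamma ((2 * m + 1) / q) / Gamma (1 / q))
      ≤ t ^ (2 * m) / (2 * m)! * ((3 / 2) ^ m * (2 * m)! * σ ^ (2 * m)) := by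
        gcongr
        exact genGaussian_moment_le hq hσ m
    _ = (3 / 2 * t ^ 2 * σ ^ 2) ^ m := by
        field_simp
        rw [pow_mul, pow_mul]
        ring

theorem genGaussian_mgf_bound_general
    (b q : ℝ) (hb : 0 < b) (hq : 1 ≤ q)
    (σ : ℝ) (hσ : σ ^ 2 = b ^ 2 * Real.Gamma (3 / q) / Real.Gamma (1 / q))
    (t : ℝ) (ht : 1.85 ^ 2 * t ^ 2 * σ ^ 2 < 1) :
    (∫ z, Real.exp (t * z) ∂(genGaussian b q)) ≤
        ∑' m : ℕ, (1.85 ^ 2 * t ^ 2 * σ ^ 2) ^ m ∧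
      ∑' m : ℕ, (1.85 ^ 2 * t ^ 2 * σ ^ 2) ^ m = (1 - 1.85 ^ 2 * t ^ 2 * σ ^ 2)⁻¹ := by
  set r : ℝ := 1.85 ^ 2 * t ^ 2 * σ ^ 2
  have hr : 0 ≤ r := by positivity
  refine ⟨?_, tsum_geometric_of_lt_one hr ht⟩
  have hsum : ∑' m : ℕ, ENNReal.ofReal (r ^ m) = ENNReal.ofReal (∑' m : ℕ, r ^ m) :=
    (ENNReal.ofReal_tsum_of_nonneg (pow_nonneg hr) (summable_geometric_of_lt_one hr ht)).symm
  have hr' : 3 / 2 * t ^ 2 * σ ^ 2 ≤ r := by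
    show _ ≤ 1.85 ^ 2 * t ^ 2 * σ ^ 2
    gcongr
    norm_num
  calc ∫ z, exp (t * z) ∂genGaussian b q
      = (∫⁻ z, ENNReal.ofReal (exp (t * z)) ∂genGaussian b q).toReal :=
        integral_eq_lintegral_of_nonneg_ae (ae_of_all _ fun z => (exp_pos _).le) (by fun_prop)
    _ ≤ (∑' m : ℕ, ENNReal.ofReal (r ^ m)).toReal := by
        refine ENNReal.toReal_mono (hsum ▸ ENNReal.ofReal_ne_top)
          ((genGaussian_lintegral_exp_mul_le hb hq hσ t).trans (ENNReal.tsum_le_tsum fun m => ?_))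
        exact ENNReal.ofReal_le_ofReal (pow_le_pow_left₀ (by positivity) hr' m)
    _ = ∑' m : ℕ, r ^ m := by
        rw [hsum, ENNReal.toReal_ofReal (tsum_nonneg fun m => pow_nonneg hr m)]

/-- **Lemma 1** (with constant `c = 1.85`): bound on the moment generating function of a
generalized Gaussian random variable. -/
theorem genGaussian_mgf_bound
    (b q : ℝ) (hb : 0 < b) (hq : 1 ≤ q)
    (σ : ℝ) (hσ0 : 0 ≤ σ) (hσ : σ ^ 2 = b ^ 2 * Real.Gamma (3 / q) / Real.Gamma (1 / q))
    (t : ℝ) (ht : 1.85 ^ 2 * t ^ 2 * σ ^ 2 < 1) :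
    (∫ z, Real.exp (t * z) ∂(genGaussian b q)) ≤
        ∑' m : ℕ, (1.85 ^ 2 * t ^ 2 * σ ^ 2) ^ m ∧
      ∑' m : ℕ, (1.85 ^ 2 * t ^ 2 * σ ^ 2) ^ m = (1 - 1.85 ^ 2 * t ^ 2 * σ ^ 2)⁻¹ :=
  genGaussian_mgf_bound_general b q hb hq σ hσ t ht
end

section
/- Let d ≥ 1 be an integer, b > 0, and 0 < ε ≤ 2b. Let e₁ ∈ ℝ^d denote the first standard basis vector. Then the intersection of the two ℓ₁-balls {w ∈ ℝ^d : ‖w‖₁ ≤ b} and {w ∈ ℝ^d : ‖w − ε·e₁‖₁ ≤ b} is contained in the ℓ₁-ball {w ∈ ℝ^d : ‖w − (ε/2)·e₁‖₁ ≤ b − ε/2} of radius b − ε/2 centered at (ε/2)·e₁. -/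
/-!
For real numbers the largest distance from `x` to the endpoints of a segment `[a, c]` is the
distance from `x` to the midpoint plus half the length of the segment. Summed with the
coordinates other than the first, which are the same for all three centres, this says that the
ℓ₁-distance from `w` to `(ε/2)·e₁` plus `ε/2` is at most the larger of `‖w‖₁` and `‖w - ε·e₁‖₁`.
-/

open Finset

theorem max_abs_sub_eq_abs_sub_midpoint_add (x a c : ℝ) :
    max |x - a| |x - c| = |x - (a + c) / 2| + |a - c| / 2 := by
  rcases abs_cases (x - a) with ⟨ha, ha'⟩ | ⟨ha, ha'⟩ <;>
  rcases abs_cases (x - c) with ⟨hc, hc'⟩ | ⟨hc, hc'⟩ <;>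
  rcases abs_cases (x - (a + c) / 2) with ⟨hm, hm'⟩ | ⟨hm, hm'⟩ <;>
  rcases abs_cases (a - c) with ⟨hac, hac'⟩ | ⟨hac, hac'⟩ <;>
  rw [ha, hc, hm, hac, max_def] <;> split_ifs <;> linarith

theorem sum_abs_sub_single {ι : Type*} [Fintype ι] [DecidableEq ι] (w : ι → ℝ) (j : ι)
    (c : ℝ) :
    ∑ i, |w i - (Pi.single j c : ι → ℝ) i| = |w j - c| + ∑ i ∈ univ.erase j, |w i| := by
  rw [← add_sum_erase _ _ (mem_univ j), Pi.single_eq_same]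
  congr 1
  refine sum_congr rfl fun i hi => ?_
  rw [Pi.single_eq_of_ne (ne_of_mem_erase hi), sub_zero]

theorem l1_balls_intersection_subset_general
    (d : ℕ) (hd : 0 < d) (b ε : ℝ) :
    {w : Fin d → ℝ | ∑ i, |w i| ≤ b} ∩
        {w : Fin d → ℝ |
          ∑ i, |w i - (Pi.single (⟨0, hd⟩ : Fin d) ε : Fin d → ℝ) i| ≤ b} ⊆
      {w : Fin d → ℝ |
        ∑ i, |w i - (Pi.single (⟨0, hd⟩ : Fin d) (ε / 2) : Fin d → ℝ) i| ≤ b - ε / 2} := by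
  set j : Fin d := ⟨0, hd⟩
  rintro w ⟨h₀, hε⟩
  have h₀' := sum_abs_sub_single w j 0
  simp only [Pi.single_zero, Pi.zero_apply, sub_zero] at h₀'
  simp only [Set.mem_ofPred_eq, sum_abs_sub_single, h₀'] at h₀ hε ⊢
  have hmid := max_abs_sub_eq_abs_sub_midpoint_add (w j) 0 ε
  simp only [sub_zero, zero_add, zero_sub, abs_neg] at hmid
  have hmax : max |w j| |w j - ε| ≤ b - ∑ i ∈ univ.erase j, |w i| :=
    max_le (by linarith) (by linarith)
  linarith [le_abs_self ε]

/-- **Lemma 2.** The intersection of the ℓ₁-ball of radius `b` centered at the origin and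
the ℓ₁-ball of radius `b` centered at `ε·e₁` is contained in the ℓ₁-ball of radius
`b − ε/2` centered at `(ε/2)·e₁`. -/
theorem l1_balls_intersection_subset
    (d : ℕ) (hd : 0 < d) (b ε : ℝ) (hb : 0 < b) (hε : 0 < ε) (hεb : ε ≤ 2 * b) :
    {w : Fin d → ℝ | ∑ i, |w i| ≤ b} ∩
        {w : Fin d → ℝ |
          ∑ i, |w i - (Pi.single (⟨0, hd⟩ : Fin d) ε : Fin d → ℝ) i| ≤ b} ⊆
      {w : Fin d → ℝ |
        ∑ i, |w i - (Pi.single (⟨0, hd⟩ : Fin d) (ε / 2) : Fin d → ℝ) i| ≤ b - ε / 2} :=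
  l1_balls_intersection_subset_general d hd b ε
end

section
/- Let b > 0 and q ≥ 1, and let Z be a real random variable with the generalized Gaussian distribution of scale b and shape q. Then for every natural number n, E[Z^n] ≤ b^n · n!. Equivalently, for every even natural number n and every q ≥ 1, Γ((n+1)/q) ≤ n! · Γ(1/q). -/
open MeasureTheory Real

/-!
Odd moments vanish by symmetry. For even `n` the substitution `x = b t^(1/q)` gives
`E[Zⁿ] = bⁿ Γ((n+1)/q) / Γ(1/q)`, so everything reduces to `Γ((n+1)s) ≤ n! Γ(s)` for
`s = 1/q ∈ (0, 1]`. Writing `(n+1)s = (1-s)·s + s·(s+n)`, log-convexity of `Γ` gives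
`Γ((n+1)s) ≤ Γ(s)^(1-s) Γ(s+n)^s`, and `Γ(s+n) = Γ(s) ∏_{k<n} (s+k) ≤ n! Γ(s)` because `s ≤ 1`.
-/

namespace Real

theorem Gamma_add_nat_le_factorial_mul_Gamma {s : ℝ} (hs0 : 0 < s) (hs1 : s ≤ 1) (n : ℕ) :
    Gamma (s + n) ≤ n.factorial * Gamma s := by
  induction n with
  | zero => simp
  | succ k ih =>
    calc Gamma (s + ↑(k + 1)) = (s + k) * Gamma (s + k) := by
          rw [Nat.cast_succ, ← add_assoc, Gamma_add_one (by positivity)]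
      _ ≤ (k + 1) * (k.factorial * Gamma s) :=
          mul_le_mul (by linarith) ih (Gamma_pos_of_pos (by positivity)).le (by positivity)
      _ = (k + 1).factorial * Gamma s := by push_cast [Nat.factorial_succ]; ring

theorem Gamma_one_sub_mul_add_mul_le {x y t : ℝ} (hx : 0 < x) (hy : 0 < y) (ht0 : 0 ≤ t)
    (ht1 : t ≤ 1) : Gamma ((1 - t) * x + t * y) ≤ Gamma x ^ (1 - t) * Gamma y ^ t := by
  rcases ht0.eq_or_lt with rfl | ht0
  · simp
  rcases ht1.eq_or_lt with rfl | ht1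
  · simp
  exact Gamma_mul_add_mul_le_rpow_Gamma_mul_rpow_Gamma hx hy (by linarith) ht0 (by ring)

theorem Gamma_nat_succ_mul_le_factorial_mul_Gamma {s : ℝ} (hs0 : 0 < s) (hs1 : s ≤ 1) (n : ℕ) :
    Gamma ((n + 1) * s) ≤ n.factorial * Gamma s := by
  have hΓs : 0 < Gamma s := Gamma_pos_of_pos hs0
  have hfac : (1 : ℝ) ≤ n.factorial := mod_cast n.factorial_pos
  calc Gamma ((n + 1) * s) = Gamma ((1 - s) * s + s * (s + n)) := by ring_nf
    _ ≤ Gamma s ^ (1 - s) * Gamma (s + n) ^ s :=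
        Gamma_one_sub_mul_add_mul_le hs0 (by positivity) hs0.le hs1
    _ ≤ Gamma s ^ (1 - s) * (n.factorial * Gamma s) ^ s := by
        gcongr
        exact Gamma_add_nat_le_factorial_mul_Gamma hs0 hs1 n
    _ = (n.factorial : ℝ) ^ s * Gamma s := by
        rw [mul_rpow (by positivity) hΓs.le, mul_left_comm, ← rpow_add hΓs]
        norm_num
    _ ≤ n.factorial * Gamma s := by
        gcongr
        simpa using rpow_le_rpow_of_exponent_le hfac hs1

end Real

theorem integral_mul_pow_eq_zero_of_odd {g : ℝ → ℝ} (hg : ∀ z, g (-z) = g z) {n : ℕ}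
    (hn : Odd n) : ∫ z, g z * z ^ n = 0 := by
  have h := integral_neg_eq_self (fun z => g z * z ^ n) volume
  simp only [hg, hn.neg_pow, mul_neg, integral_neg] at h
  linarith

theorem integral_Ioi_rpow_mul_exp_neg_div_rpow {b q p : ℝ} (hb : 0 < b) (hq : 0 < q)
    (hp : -1 < p) :
    ∫ x in Set.Ioi (0 : ℝ), x ^ p * exp (-(x / b) ^ q) = b ^ (p + 1) / q * Gamma ((p + 1) / q) := by
  have hscale : ∀ x ∈ Set.Ioi (0 : ℝ),
      x ^ p * exp (-(x / b) ^ q) = x ^ p * exp (-b ^ (-q) * x ^ q) := by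
    intro x hx
    rw [div_rpow (le_of_lt hx) hb.le, rpow_neg hb.le]
    ring_nf
  rw [setIntegral_congr_fun measurableSet_Ioi hscale,
    integral_rpow_mul_exp_neg_mul_rpow hq hp (by positivity), ← rpow_mul hb.le]
  field_simp

noncomputable def genGaussianDensity (b q z : ℝ) : ℝ :=
  q / (2 * b * Gamma (1 / q)) * exp (-(|z| / b) ^ q)

theorem integral_genGaussian {b q : ℝ} (hb : 0 ≤ b) (hq : 0 ≤ q) (f : ℝ → ℝ) :
    ∫ z, f z ∂genGaussian b q = ∫ z, genGaussianDensity b q z * f z := by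
  rw [genGaussian, integral_withDensity_eq_integral_toReal_smul (by fun_prop)
    (ae_of_all _ fun _ => ENNReal.ofReal_lt_top)]
  congr 1 with z
  rw [ENNReal.toReal_ofReal (by positivity), smul_eq_mul, genGaussianDensity]

theorem integral_pow_genGaussian_of_odd {b q : ℝ} (hb : 0 ≤ b) (hq : 0 ≤ q) {n : ℕ}
    (hn : Odd n) : ∫ z, z ^ n ∂genGaussian b q = 0 := by
  rw [integral_genGaussian hb hq]
  exact integral_mul_pow_eq_zero_of_odd (fun z => by simp [genGaussianDensity]) hn

theorem integral_pow_genGaussian_of_even {b q : ℝ} (hb : 0 < b) (hq : 0 < q) {n : ℕ}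
    (hn : Even n) :
    ∫ z, z ^ n ∂genGaussian b q = b ^ n * Gamma ((n + 1) / q) / Gamma (1 / q) := by
  set c := q / (2 * b * Gamma (1 / q))
  rw [integral_genGaussian hb.le hq.le]
  calc ∫ z, genGaussianDensity b q z * z ^ n
      = ∫ z, c * (|z| ^ (n : ℝ) * exp (-(|z| / b) ^ q)) := by
        congr 1 with z
        rw [rpow_natCast, hn.pow_abs, genGaussianDensity]
        ring
    _ = 2 * (c * (b ^ ((n : ℝ) + 1) / q * Gamma ((n + 1) / q))) := by
        rw [integral_comp_abs (f := fun x => c * (x ^ (n : ℝ) * exp (-(x / b) ^ q))),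
          integral_const_mul,
          integral_Ioi_rpow_mul_exp_neg_div_rpow hb hq (by linarith [n.cast_nonneg (α := ℝ)])]
    _ = b ^ n * Gamma ((n + 1) / q) / Gamma (1 / q) := by
        rw [rpow_add_one hb.ne', rpow_natCast]
        simp only [c]
        field_simp

/-- Moment bound for the generalized Gaussian distribution with `q ≥ 1`:
`E[Zⁿ] ≤ bⁿ·n!`; equivalently `Γ((n+1)/q) ≤ n!·Γ(1/q)` for even `n`. -/
theorem genGaussian_moment_bound (b q : ℝ) (hb : 0 < b) (hq : 1 ≤ q) :
    (∀ n : ℕ, (∫ z, z ^ n ∂(genGaussian b q)) ≤ b ^ n * (n.factorial : ℝ)) ∧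
      (∀ n : ℕ, Even n →
        Real.Gamma (((n : ℝ) + 1) / q) ≤ (n.factorial : ℝ) * Real.Gamma (1 / q)) := by
  have hq0 : 0 < q := by linarith
  have hGamma (n : ℕ) : Gamma ((n + 1) / q) ≤ n.factorial * Gamma (1 / q) := by
    rw [div_eq_mul_one_div]
    exact Gamma_nat_succ_mul_le_factorial_mul_Gamma (by positivity)
      (div_le_one_of_le₀ hq hq0.le) n
  refine ⟨fun n => ?_, fun n _ => hGamma n⟩
  rcases Nat.even_or_odd n with hn | hn
  · rw [integral_pow_genGaussian_of_even hb hq0 hn, div_le_iff₀ (by positivity), mul_assoc]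
    gcongr
    exact hGamma n
  · rw [integral_pow_genGaussian_of_odd hb.le hq0.le hn]
    positivity
end

section
/- Let d ≥ 1 be an integer, σ > 0, and let p ≥ 2 be a real number. Let P be the Gaussian measure N(0, σ²·I_d) on ℝ^d (the d-fold product of the centered Gaussian with variance σ² on ℝ). Let C be a finite label set, h : ℝ^d → C measurable, x ∈ ℝ^d, c₁ ∈ C, and let p₁, p₂ ∈ (0,1) with p₂ ≤ p₁ be such that P{Δ : h(x+Δ) = c₁} ≥ p₁ and P{Δ : h(x+Δ) = c} ≤ p₂ for every c ≠ c₁. Then for every δ ∈ ℝ^d with (∑_{i=1}^d |δ_i|^p)^{1/p} < (σ/(2·d^{1/2 − 1/p}))·(Φ^{−1}(p₁) − Φ^{−1}(p₂)), it holds that P{Δ : h(x+δ+Δ) = c₁} > P{Δ : h(x+δ+Δ) = c} for every c ≠ c₁, where Φ^{−1} is the inverse of the standard Gaussian cumulative distribution function. -/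
/-
Shifting the smoothing noise by `δ` replaces `N(0, σ² I)` by `N(δ, σ² I)`, whose density with
respect to `N(0, σ² I)` is an increasing function of `⟨δ, z⟩`. By the Neyman–Pearson lemma, among
all sets of prescribed `N(0, σ² I)`-measure, the half-spaces `{⟨δ, z⟩ ≤ k}` have the least and the
half-spaces `{⟨δ, z⟩ ≥ k}` the largest `N(δ, σ² I)`-measure. Since `⟨δ, z⟩` is a real Gaussian under
both measures, the shifted probability of `c₁` is at least `Φ(Φ⁻¹(p₁) - ‖δ‖₂/σ)` and that of any
other class at most `Φ(Φ⁻¹(p₂) + ‖δ‖₂/σ)`; these are strictly ordered once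
`‖δ‖₂ < σ (Φ⁻¹(p₁) - Φ⁻¹(p₂)) / 2`, which follows from the hypothesis on `‖δ‖_p` by
`‖δ‖₂ ≤ d^(1/2 - 1/p) ‖δ‖_p`.
-/

open MeasureTheory ProbabilityTheory Real
open scoped ENNReal NNReal
open Set

namespace MeasureTheory

namespace Measure

variable {ι : Type*} [Fintype ι] {α : ι → Type*} [∀ i, MeasurableSpace (α i)]

theorem lintegral_pi_prod_eq_prod (μ : ∀ i, Measure (α i)) [∀ i, IsProbabilityMeasure (μ i)]
    {f : ∀ i, α i → ℝ≥0∞} (hf : ∀ i, Measurable (f i)) :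
    ∫⁻ x, ∏ i, f i (x i) ∂Measure.pi μ = ∏ i, ∫⁻ y, f i y ∂μ i := by
  rw [lintegral_prod_eq_prod_lintegral_of_indepFun _ _
    (iIndepFun_pi fun i => (hf i).aemeasurable) fun i => (hf i).comp (measurable_pi_apply i)]
  exact Finset.prod_congr rfl fun i _ => (measurePreserving_eval μ i).lintegral_comp (hf i)

theorem pi_withDensity (μ : ∀ i, Measure (α i)) [∀ i, IsProbabilityMeasure (μ i)]
    {f : ∀ i, α i → ℝ≥0∞} (hf : ∀ i, Measurable (f i))
    [∀ i, SigmaFinite ((μ i).withDensity (f i))] :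
    Measure.pi (fun i => (μ i).withDensity (f i))
      = (Measure.pi μ).withDensity (fun x => ∏ i, f i (x i)) := by
  refine Measure.pi_eq fun s hs => ?_
  rw [withDensity_apply _ (.univ_pi hs), ← lintegral_indicator (.univ_pi hs)]
  have hbox : (univ.pi s).indicator (fun x => ∏ i, f i (x i))
      = fun x => ∏ i, (s i).indicator (f i) (x i) := by
    funext x
    simp only [Set.indicator, Finset.prod_ite_zero]
    split_ifs <;> simp_all
  rw [hbox, lintegral_pi_prod_eq_prod μ fun i => (hf i).indicator (hs i)]
  exact Finset.prod_congr rfl fun i _ => by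
    rw [lintegral_indicator (hs i), withDensity_apply _ (hs i)]

end Measure

theorem withDensity_apply_le_of_threshold {α : Type*} [MeasurableSpace α] (μ : Measure α)
    [IsFiniteMeasure μ] {L : α → ℝ≥0∞} {A H : Set α} (hA : MeasurableSet A)
    (hH : MeasurableSet H) {k : ℝ≥0∞} (hAH : ∀ a ∈ A \ H, k ≤ L a) (hHA : ∀ a ∈ H \ A, L a ≤ k)
    (hμ : μ H ≤ μ A) :
    μ.withDensity L H ≤ μ.withDensity L A := by
  have hdiff : μ (H \ A) ≤ μ (A \ H) := by
    rw [← ENNReal.add_le_add_iff_left (measure_ne_top μ (A ∩ H)), measure_inter_add_sdiff A hH,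
      inter_comm, measure_inter_add_sdiff H hA]
    exact hμ
  calc μ.withDensity L H
      = μ.withDensity L (H ∩ A) + ∫⁻ a in H \ A, L a ∂μ := by
        rw [← withDensity_apply _ (hH.diff hA), measure_inter_add_sdiff H hA]
    _ ≤ μ.withDensity L (H ∩ A) + k * μ (H \ A) := by
        gcongr
        rw [← setLIntegral_const]
        exact setLIntegral_mono' (hH.diff hA) hHA
    _ ≤ μ.withDensity L (A ∩ H) + ∫⁻ a in A \ H, L a ∂μ := by
        rw [inter_comm]
        gcongr
        calc k * μ (H \ A) ≤ k * μ (A \ H) := by gcongr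
          _ = ∫⁻ _ in A \ H, k ∂μ := (setLIntegral_const _ _).symm
          _ ≤ _ := setLIntegral_mono' (hA.diff hH) hAH
    _ = μ.withDensity L A := by
        rw [← withDensity_apply _ (hA.diff hH), measure_inter_add_sdiff A hH]

end MeasureTheory

namespace ProbabilityTheory

theorem gaussianReal_eq_withDensity (m : ℝ) {v : ℝ≥0} (hv : v ≠ 0) :
    gaussianReal m v = (gaussianReal 0 v).withDensity
      (fun x => ENNReal.ofReal (rexp ((m * x - m ^ 2 / 2) / v))) := by
  rw [gaussianReal_of_var_ne_zero m hv, gaussianReal_of_var_ne_zero 0 hv,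
    ← withDensity_mul _ (measurable_gaussianPDF 0 v) (by fun_prop)]
  congr 1
  funext x
  rw [Pi.mul_apply, gaussianPDF, gaussianPDF, ← ENNReal.ofReal_mul (gaussianPDFReal_nonneg _ _ _)]
  simp only [gaussianPDFReal]
  rw [mul_assoc _ (rexp _), ← Real.exp_add]
  congr 3
  field_simp
  ring

theorem gaussianReal_Iic_eq (m t : ℝ) {v : ℝ≥0} (hv : v ≠ 0) :
    gaussianReal m v (Iic t) = gaussianReal 0 1 (Iic ((t - m) / √v)) := by
  have hs : 0 < √(v : ℝ) := Real.sqrt_pos.2 (by positivity)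
  have hstd : ((gaussianReal m v).map (· - m)).map (· / √v) = gaussianReal 0 1 := by
    rw [gaussianReal_map_sub_const, gaussianReal_map_div_const, sub_self, zero_div]
    congr
    ext
    simp [Real.sq_sqrt, hv]
  rw [← hstd, Measure.map_map (by fun_prop) (by fun_prop),
    Measure.map_apply (by fun_prop) measurableSet_Iic]
  congr 1
  ext x
  simp [div_le_div_iff_of_pos_right hs]

theorem gaussianReal_Ici_eq (m t : ℝ) {v : ℝ≥0} (hv : v ≠ 0) :
    gaussianReal m v (Ici t) = gaussianReal 0 1 (Iic ((m - t) / √v)) := by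
  have hneg : gaussianReal m v (Ici t) = gaussianReal (-m) v (Iic (-t)) := by
    rw [← gaussianReal_map_neg, Measure.map_apply measurable_neg measurableSet_Iic]
    simp
  rw [hneg, gaussianReal_Iic_eq _ _ hv, neg_sub_neg]

theorem strictMono_gaussianReal_Iic (m : ℝ) {v : ℝ≥0} (hv : v ≠ 0) :
    StrictMono fun t => gaussianReal m v (Iic t) := by
  intro a b hab
  dsimp only
  rw [← Iic_union_Ioc_eq_Iic hab.le, measure_union (Iic_disjoint_Ioc le_rfl) measurableSet_Ioc]
  refine ENNReal.lt_add_right (measure_ne_top _ _) fun h0 => ?_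
  have := gaussianReal_absolutelyContinuous' m hv h0
  exact hab.not_ge (by simpa using this)

section Pi

variable {ι : Type*} [Fintype ι]

theorem pi_gaussianReal_eq_withDensity (m : ι → ℝ) {v : ℝ≥0} (hv : v ≠ 0) :
    Measure.pi (fun i => gaussianReal (m i) v)
      = (Measure.pi fun _ : ι => gaussianReal 0 v).withDensity
        (fun z => ENNReal.ofReal (rexp ((∑ i, m i * z i - (∑ i, m i ^ 2) / 2) / v))) := by
  rw [funext fun i => gaussianReal_eq_withDensity (m i) hv,
    Measure.pi_withDensity _ fun i => by fun_prop]
  congr 1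
  funext z
  rw [← ENNReal.ofReal_prod_of_nonneg fun i _ => (exp_pos _).le, ← exp_sum, ← Finset.sum_div,
    Finset.sum_sub_distrib, ← Finset.sum_div]

theorem exists_monotone_pi_gaussianReal_eq_withDensity (δ : ι → ℝ) {σ : ℝ≥0} (hσ : σ ≠ 0) :
    ∃ φ : ℝ → ℝ≥0∞, Monotone φ ∧ Measure.pi (fun i => gaussianReal (δ i) (σ ^ 2))
      = (Measure.pi fun _ : ι => gaussianReal 0 (σ ^ 2)).withDensity
          fun z => φ (∑ i, δ i * z i) :=
  ⟨fun y => ENNReal.ofReal (rexp ((y - (∑ i, δ i ^ 2) / 2) / (σ ^ 2 : ℝ≥0))),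
    fun _ _ hy => ENNReal.ofReal_le_ofReal (exp_le_exp.2 (by gcongr)),
    pi_gaussianReal_eq_withDensity δ (pow_ne_zero 2 hσ)⟩

theorem pi_gaussianReal_map_const_add (m : ι → ℝ) (v : ℝ≥0) :
    (Measure.pi fun _ : ι => gaussianReal 0 v).map (m + ·)
      = Measure.pi fun i => gaussianReal (m i) v := by
  have := Measure.pi_map_pi (μ := fun _ : ι => gaussianReal 0 v)
    (f := fun i y => m i + y) fun i => by fun_prop
  simp only [gaussianReal_map_const_add, zero_add] at this
  exact this

theorem pi_gaussianReal_map_sum_mul (a m : ι → ℝ) (v : ℝ≥0) :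
    (Measure.pi fun i => gaussianReal (m i) v).map (fun z => ∑ i, a i * z i)
      = gaussianReal (∑ i, a i * m i) ((∑ i, a i ^ 2).toNNReal * v) := by
  have hg : Measurable fun z : ι → ℝ => ∑ i, a i * z i := by fun_prop
  have := Measure.isProbabilityMeasure_map (μ := Measure.pi fun i => gaussianReal (m i) v)
    hg.aemeasurable
  refine Measure.ext_of_charFun (funext fun t => ?_)
  rw [charFun_apply_real, integral_map hg.aemeasurable (by fun_prop)]
  simp only [Complex.ofReal_sum, Finset.mul_sum, Finset.sum_mul, Complex.exp_sum]
  rw [integral_fintype_prod_eq_prod (f := fun i y => Complex.exp (t * ↑(a i * y) * Complex.I))]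
  have hfactor : ∀ i, ∫ y, Complex.exp (t * ↑(a i * y) * Complex.I) ∂gaussianReal (m i) v
      = charFun (gaussianReal (m i) v) (t * a i) := fun i => by
    rw [charFun_apply_real]
    congr 1 with y
    push_cast
    ring_nf
  simp_rw [hfactor, charFun_gaussianReal, ← Complex.exp_sum]
  congr 1
  push_cast [Real.coe_toNNReal _ (Finset.sum_nonneg fun i _ => sq_nonneg (a i))]
  simp only [Finset.sum_sub_distrib, Finset.mul_sum, Finset.sum_mul, Finset.sum_div]
  congr 1 <;> exact Finset.sum_congr rfl fun i _ => by ring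

theorem sum_sq_pos_of_ne_zero {δ : ι → ℝ} (hδ : δ ≠ 0) : 0 < ∑ i, δ i ^ 2 := by
  obtain ⟨i, hi⟩ := Function.ne_iff.1 hδ
  exact Finset.sum_pos' (fun j _ => sq_nonneg (δ j))
    ⟨i, Finset.mem_univ i, by simpa [sq_pos_iff] using hi⟩

theorem toNNReal_sum_sq_mul_sq_ne_zero {δ : ι → ℝ} (hδ : δ ≠ 0) {σ : ℝ≥0} (hσ : σ ≠ 0) :
    (∑ i, δ i ^ 2).toNNReal * σ ^ 2 ≠ 0 :=
  mul_ne_zero (Real.toNNReal_pos.2 (sum_sq_pos_of_ne_zero hδ)).ne' (pow_ne_zero 2 hσ)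

theorem sqrt_coe_toNNReal_sum_sq_mul_sq (δ : ι → ℝ) (σ : ℝ≥0) :
    √(((∑ i, δ i ^ 2).toNNReal * σ ^ 2 : ℝ≥0) : ℝ) = √(∑ i, δ i ^ 2) * σ := by
  rw [NNReal.coe_mul, Real.coe_toNNReal _ (by positivity), NNReal.coe_pow,
    Real.sqrt_mul (by positivity), Real.sqrt_sq σ.coe_nonneg]

theorem pi_gaussianReal_sum_mul_le (δ m : ι → ℝ) {σ : ℝ≥0} (hδ : δ ≠ 0) (hσ : σ ≠ 0) (k : ℝ) :
    Measure.pi (fun i => gaussianReal (m i) (σ ^ 2)) {z | ∑ i, δ i * z i ≤ k}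
      = gaussianReal 0 1 (Iic ((k - ∑ i, δ i * m i) / (√(∑ i, δ i ^ 2) * σ))) := by
  rw [show {z : ι → ℝ | ∑ i, δ i * z i ≤ k} = (fun z => ∑ i, δ i * z i) ⁻¹' Iic k from rfl,
    ← Measure.map_apply (by fun_prop) measurableSet_Iic, pi_gaussianReal_map_sum_mul,
    gaussianReal_Iic_eq _ _ (toNNReal_sum_sq_mul_sq_ne_zero hδ hσ), sqrt_coe_toNNReal_sum_sq_mul_sq]

theorem pi_gaussianReal_le_sum_mul (δ m : ι → ℝ) {σ : ℝ≥0} (hδ : δ ≠ 0) (hσ : σ ≠ 0) (k : ℝ) :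
    Measure.pi (fun i => gaussianReal (m i) (σ ^ 2)) {z | k ≤ ∑ i, δ i * z i}
      = gaussianReal 0 1 (Iic ((∑ i, δ i * m i - k) / (√(∑ i, δ i ^ 2) * σ))) := by
  rw [show {z : ι → ℝ | k ≤ ∑ i, δ i * z i} = (fun z => ∑ i, δ i * z i) ⁻¹' Ici k from rfl,
    ← Measure.map_apply (by fun_prop) measurableSet_Ici, pi_gaussianReal_map_sum_mul,
    gaussianReal_Ici_eq _ _ (toNNReal_sum_sq_mul_sq_ne_zero hδ hσ), sqrt_coe_toNNReal_sum_sq_mul_sq]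

theorem le_pi_gaussianReal_preimage_const_add (δ : ι → ℝ) {σ : ℝ≥0} (hσ : σ ≠ 0) {A : Set (ι → ℝ)}
    (hA : MeasurableSet A) {t : ℝ}
    (h : gaussianReal 0 1 (Iic t) ≤ Measure.pi (fun _ : ι => gaussianReal 0 (σ ^ 2)) A) :
    gaussianReal 0 1 (Iic (t - √(∑ i, δ i ^ 2) / σ))
      ≤ Measure.pi (fun _ : ι => gaussianReal 0 (σ ^ 2)) ((δ + ·) ⁻¹' A) := by
  rcases eq_or_ne δ 0 with rfl | hδ
  · simpa using h
  set μ := Measure.pi fun _ : ι => gaussianReal 0 (σ ^ 2)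
  set s := √(∑ i, δ i ^ 2) with hs
  have hs_pos : 0 < s := Real.sqrt_pos.2 (sum_sq_pos_of_ne_zero hδ)
  have hs_sq : s ^ 2 = ∑ i, δ i * δ i := by
    rw [hs, Real.sq_sqrt (by positivity)]
    simp only [sq]
  have hsσ : 0 < s * σ := mul_pos hs_pos (NNReal.coe_pos.2 (pos_iff_ne_zero.2 hσ))
  obtain ⟨φ, hφ, hν⟩ := exists_monotone_pi_gaussianReal_eq_withDensity δ hσ
  -- The threshold `s σ t` gives the half-space centred measure `Φ t`.
  calc gaussianReal 0 1 (Iic (t - s / σ))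
      = Measure.pi (fun i => gaussianReal (δ i) (σ ^ 2)) {z | ∑ i, δ i * z i ≤ s * σ * t} := by
        rw [pi_gaussianReal_sum_mul_le δ δ hδ hσ, ← hs, ← hs_sq]
        congr 2
        field_simp [hs_pos.ne']
    _ ≤ Measure.pi (fun i => gaussianReal (δ i) (σ ^ 2)) A := by
        rw [hν]
        refine withDensity_apply_le_of_threshold μ hA (measurableSet_le (by fun_prop) (by fun_prop))
          (k := φ (s * σ * t)) (fun z hz => hφ (not_le.1 hz.2).le) (fun z hz => hφ hz.1) ?_
        rw [show μ = Measure.pi fun i => gaussianReal ((0 : ι → ℝ) i) (σ ^ 2) from rfl,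
          pi_gaussianReal_sum_mul_le δ 0 hδ hσ, ← hs]
        simpa only [Pi.zero_apply, mul_zero, Finset.sum_const_zero, sub_zero,
          mul_div_cancel_left₀ _ hsσ.ne'] using h
    _ = μ ((δ + ·) ⁻¹' A) := by
        rw [← Measure.map_apply (by fun_prop) hA, pi_gaussianReal_map_const_add]

theorem pi_gaussianReal_preimage_const_add_le (δ : ι → ℝ) {σ : ℝ≥0} (hσ : σ ≠ 0) {A : Set (ι → ℝ)}
    (hA : MeasurableSet A) {t : ℝ}
    (h : Measure.pi (fun _ : ι => gaussianReal 0 (σ ^ 2)) A ≤ gaussianReal 0 1 (Iic t)) :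
    Measure.pi (fun _ : ι => gaussianReal 0 (σ ^ 2)) ((δ + ·) ⁻¹' A)
      ≤ gaussianReal 0 1 (Iic (t + √(∑ i, δ i ^ 2) / σ)) := by
  rcases eq_or_ne δ 0 with rfl | hδ
  · simpa using h
  set μ := Measure.pi fun _ : ι => gaussianReal 0 (σ ^ 2)
  set s := √(∑ i, δ i ^ 2) with hs
  have hs_pos : 0 < s := Real.sqrt_pos.2 (sum_sq_pos_of_ne_zero hδ)
  have hs_sq : s ^ 2 = ∑ i, δ i * δ i := by
    rw [hs, Real.sq_sqrt (by positivity)]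
    simp only [sq]
  have hsσ : 0 < s * σ := mul_pos hs_pos (NNReal.coe_pos.2 (pos_iff_ne_zero.2 hσ))
  obtain ⟨φ, hφ, hν⟩ := exists_monotone_pi_gaussianReal_eq_withDensity δ hσ
  calc μ ((δ + ·) ⁻¹' A) = Measure.pi (fun i => gaussianReal (δ i) (σ ^ 2)) A := by
        rw [← Measure.map_apply (by fun_prop) hA, pi_gaussianReal_map_const_add]
    _ ≤ Measure.pi (fun i => gaussianReal (δ i) (σ ^ 2)) {z | -(s * σ * t) ≤ ∑ i, δ i * z i} := by
        rw [hν]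
        refine withDensity_apply_le_of_threshold μ (measurableSet_le (by fun_prop) (by fun_prop)) hA
          (k := φ (-(s * σ * t))) (fun z hz => hφ hz.1) (fun z hz => hφ (not_le.1 hz.2).le) ?_
        rw [show μ = Measure.pi fun i => gaussianReal ((0 : ι → ℝ) i) (σ ^ 2) from rfl,
          pi_gaussianReal_le_sum_mul δ 0 hδ hσ, ← hs]
        simpa only [Pi.zero_apply, mul_zero, Finset.sum_const_zero, zero_sub, neg_neg,
          mul_div_cancel_left₀ _ hsσ.ne'] using h
    _ = gaussianReal 0 1 (Iic (t + s / σ)) := by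
        rw [pi_gaussianReal_le_sum_mul δ δ hδ hσ, ← hs, ← hs_sq]
        congr 2
        field_simp [hs_pos.ne']
        ring

end Pi

end ProbabilityTheory

theorem gaussian_smoothing_l2_certificate {ι : Type*} [Fintype ι] {σ : ℝ≥0} (hσ : σ ≠ 0)
    {C : Type*} [MeasurableSpace C] [MeasurableSingletonClass C] {h : (ι → ℝ) → C}
    (hmeas : Measurable h) (x : ι → ℝ) {c₁ c : C} {t₁ t₂ : ℝ}
    (hc₁ : gaussianReal 0 1 (Iic t₁) ≤
      Measure.pi (fun _ : ι => gaussianReal 0 (σ ^ 2)) {Δ | h (x + Δ) = c₁})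
    (hc : Measure.pi (fun _ : ι => gaussianReal 0 (σ ^ 2)) {Δ | h (x + Δ) = c} ≤
      gaussianReal 0 1 (Iic t₂))
    (δ : ι → ℝ) (hδ : √(∑ i, δ i ^ 2) < σ * (t₁ - t₂) / 2) :
    Measure.pi (fun _ : ι => gaussianReal 0 (σ ^ 2)) {Δ | h (x + δ + Δ) = c} <
      Measure.pi (fun _ : ι => gaussianReal 0 (σ ^ 2)) {Δ | h (x + δ + Δ) = c₁} := by
  have hlevel : ∀ c', MeasurableSet {Δ | h (x + Δ) = c'} := fun c' =>
    (hmeas.comp (measurable_const_add x)) (measurableSet_singleton c')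
  have hshift : ∀ c', {Δ | h (x + δ + Δ) = c'} = (δ + ·) ⁻¹' {Δ | h (x + Δ) = c'} := fun c' => by
    ext Δ
    simp [add_assoc]
  have hgap : t₂ + √(∑ i, δ i ^ 2) / σ < t₁ - √(∑ i, δ i ^ 2) / σ := by
    have : √(∑ i, δ i ^ 2) / σ < (t₁ - t₂) / 2 := by
      rw [div_lt_iff₀ (NNReal.coe_pos.2 (pos_iff_ne_zero.2 hσ))]
      linarith
    linarith
  rw [hshift, hshift]
  calc _ ≤ gaussianReal 0 1 (Iic (t₂ + √(∑ i, δ i ^ 2) / σ)) :=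
        pi_gaussianReal_preimage_const_add_le δ hσ (hlevel c) hc
    _ < gaussianReal 0 1 (Iic (t₁ - √(∑ i, δ i ^ 2) / σ)) :=
        strictMono_gaussianReal_Iic 0 one_ne_zero hgap
    _ ≤ _ := le_pi_gaussianReal_preimage_const_add δ hσ (hlevel c₁) hc₁

theorem sqrt_sum_sq_le_card_rpow_mul_sum_rpow {ι : Type*} [Fintype ι] {p : ℝ} (hp : 2 ≤ p)
    (δ : ι → ℝ) :
    √(∑ i, δ i ^ 2) ≤ (Fintype.card ι : ℝ) ^ (1 / 2 - 1 / p) * (∑ i, |δ i| ^ p) ^ (1 / p) := by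
  have hp0 : 0 < p := by linarith
  have hpow := Real.rpow_sum_le_const_mul_sum_rpow_of_nonneg Finset.univ (f := fun i => δ i ^ 2)
    (p := p / 2) (by linarith) fun i _ => sq_nonneg (δ i)
  have hsq : ∀ i, (δ i ^ 2) ^ (p / 2) = |δ i| ^ p := fun i => by
    rw [← sq_abs, ← Real.rpow_natCast, ← Real.rpow_mul (abs_nonneg _)]
    congr 1
    push_cast
    ring
  simp only [hsq, Finset.card_univ] at hpow
  calc √(∑ i, δ i ^ 2) = ((∑ i, δ i ^ 2) ^ (p / 2)) ^ (1 / p) := by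
        rw [← Real.rpow_mul (by positivity), Real.sqrt_eq_rpow]
        congr 1
        field_simp
    _ ≤ ((Fintype.card ι : ℝ) ^ (p / 2 - 1) * ∑ i, |δ i| ^ p) ^ (1 / p) := by gcongr
    _ = _ := by
        rw [Real.mul_rpow (by positivity) (by positivity), ← Real.rpow_mul (by positivity)]
        congr 2
        field_simp

theorem gaussian_smoothing_lp_certificate_general
    (d : ℕ) (hd : 1 ≤ d) (σ : NNReal) (hσ : 0 < σ) (p : ℝ) (hp : 2 ≤ p)
    {C : Type*} [MeasurableSpace C] [MeasurableSingletonClass C]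
    (h : (Fin d → ℝ) → C) (hmeas : Measurable h)
    (x : Fin d → ℝ) (c₁ : C) (p₁ p₂ : ℝ)
    (t₁ t₂ : ℝ)
    (ht₁ : ((gaussianReal 0 1) (Set.Iic t₁)).toReal = p₁)
    (ht₂ : ((gaussianReal 0 1) (Set.Iic t₂)).toReal = p₂)
    (hc₁ : ENNReal.ofReal p₁ ≤
      Measure.pi (fun _ : Fin d => gaussianReal 0 (σ ^ 2)) {Δ | h (x + Δ) = c₁})
    (hother : ∀ c : C, c ≠ c₁ →
      Measure.pi (fun _ : Fin d => gaussianReal 0 (σ ^ 2)) {Δ | h (x + Δ) = c} ≤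
        ENNReal.ofReal p₂)
    (δ : Fin d → ℝ)
    (hδ : (∑ i, |δ i| ^ p) ^ (1 / p) <
      (σ : ℝ) / (2 * (d : ℝ) ^ ((1 : ℝ) / 2 - 1 / p)) * (t₁ - t₂)) :
    ∀ c : C, c ≠ c₁ →
      Measure.pi (fun _ : Fin d => gaussianReal 0 (σ ^ 2)) {Δ | h (x + δ + Δ) = c} <
        Measure.pi (fun _ : Fin d => gaussianReal 0 (σ ^ 2)) {Δ | h (x + δ + Δ) = c₁} := by
  intro c hc
  have hD : 0 < (d : ℝ) ^ ((1 : ℝ) / 2 - 1 / p) := Real.rpow_pos_of_pos (by exact_mod_cast hd) _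
  have hℓ₂ : √(∑ i, δ i ^ 2) < σ * (t₁ - t₂) / 2 :=
    calc √(∑ i, δ i ^ 2) ≤ (d : ℝ) ^ ((1 : ℝ) / 2 - 1 / p) * (∑ i, |δ i| ^ p) ^ (1 / p) := by
          simpa using sqrt_sum_sq_le_card_rpow_mul_sum_rpow hp δ
      _ < (d : ℝ) ^ ((1 : ℝ) / 2 - 1 / p) *
            ((σ : ℝ) / (2 * (d : ℝ) ^ ((1 : ℝ) / 2 - 1 / p)) * (t₁ - t₂)) := by gcongr
      _ = σ * (t₁ - t₂) / 2 := by field_simp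
  refine gaussian_smoothing_l2_certificate hσ.ne' hmeas x ?_ ?_ δ hℓ₂
  · rwa [← ENNReal.ofReal_toReal (measure_ne_top (gaussianReal 0 1) (Iic t₁)), ht₁]
  · rw [← ENNReal.ofReal_toReal (measure_ne_top (gaussianReal 0 1) (Iic t₂)), ht₂]
    exact hother c hc

/-- **Equation (1): the ℓ_p-radius certified by isotropic Gaussian smoothing** (`p ≥ 2`).
Here `t₁ = Φ⁻¹(p₁)` and `t₂ = Φ⁻¹(p₂)` are expressed via the standard Gaussian CDF
`t ↦ (gaussianReal 0 1) (Iic t)`. If the smoothed top-class probability at `x` is at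
least `p₁` and every other class has probability at most `p₂`, then the smoothed
prediction at `x + δ` is still `c₁` whenever
`‖δ‖_p < (σ/(2 d^{1/2−1/p}))(Φ⁻¹(p₁) − Φ⁻¹(p₂))`. -/
theorem gaussian_smoothing_lp_certificate
    (d : ℕ) (hd : 1 ≤ d) (σ : NNReal) (hσ : 0 < σ) (p : ℝ) (hp : 2 ≤ p)
    {C : Type*} [Fintype C] [MeasurableSpace C] [MeasurableSingletonClass C]
    (h : (Fin d → ℝ) → C) (hmeas : Measurable h)
    (x : Fin d → ℝ) (c₁ : C) (p₁ p₂ : ℝ)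
    (hp₁ : p₁ ∈ Set.Ioo (0 : ℝ) 1) (hp₂ : p₂ ∈ Set.Ioo (0 : ℝ) 1) (hle : p₂ ≤ p₁)
    (t₁ t₂ : ℝ)
    (ht₁ : ((gaussianReal 0 1) (Set.Iic t₁)).toReal = p₁)
    (ht₂ : ((gaussianReal 0 1) (Set.Iic t₂)).toReal = p₂)
    (hc₁ : ENNReal.ofReal p₁ ≤
      Measure.pi (fun _ : Fin d => gaussianReal 0 (σ ^ 2)) {Δ | h (x + Δ) = c₁})
    (hother : ∀ c : C, c ≠ c₁ →
      Measure.pi (fun _ : Fin d => gaussianReal 0 (σ ^ 2)) {Δ | h (x + Δ) = c} ≤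
        ENNReal.ofReal p₂)
    (δ : Fin d → ℝ)
    (hδ : (∑ i, |δ i| ^ p) ^ (1 / p) <
      (σ : ℝ) / (2 * (d : ℝ) ^ ((1 : ℝ) / 2 - 1 / p)) * (t₁ - t₂)) :
    ∀ c : C, c ≠ c₁ →
      Measure.pi (fun _ : Fin d => gaussianReal 0 (σ ^ 2)) {Δ | h (x + δ + Δ) = c} <
        Measure.pi (fun _ : Fin d => gaussianReal 0 (σ ^ 2)) {Δ | h (x + δ + Δ) = c₁} :=
  gaussian_smoothing_lp_certificate_general d hd σ hσ p hp h hmeas x c₁ p₁ p₂ t₁ t₂ ht₁ ht₂ hc₁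
    hother δ hδ
end
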